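/- arXiv:1001.2928 — 11 statements merged into one kernel-verified Lean document; each statement's English description precedes it below -/
import Mathlib

section
/- If Ω : [-c, 0) → ℝ (with c > 0) is strictly monotonically increasing, positive, and C² on [-c,0), Ω(T) → +∞ as T → 0⁻, and the limit λ = lim_{T→0⁻} Ω''(T)·Ω(T)/(Ω'(T))² exists (possibly infinite), then λ ≥ 1. -/
/-! If `λ < 1`, then `Ω''Ω/Ω'² ≤ 1` on some `[a, 0)`. There `(Ω/Ω')' = 1 - Ω''Ω/Ω'² ≥ 0`, so
`Ω/Ω'` increases and `Ω'/Ω ≤ K := Ω'(a)/Ω(a)`. By Grönwall, `Ω(T) ≤ Ω(a) e^{K(T-a)}` stays bounded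
as `T → 0⁻`, contradicting `Ω → +∞`. -/

open Filter Topology Set Real

theorem hasDerivAt_div_deriv {f f' f'' : ℝ → ℝ} {x : ℝ} (hf : HasDerivAt f (f' x) x)
    (hf' : HasDerivAt f' (f'' x) x) (hx : f' x ≠ 0) :
    HasDerivAt (fun t => f t / f' t) (1 - f'' x * f x / f' x ^ 2) x := by
  refine (hf.div hf' hx).congr_deriv ?_
  field_simp

theorem monotoneOn_div_deriv_of_ratio_le_one {f f' f'' : ℝ → ℝ} {s : Set ℝ} (hs : Convex ℝ s)
    (hf : ∀ x ∈ s, HasDerivAt f (f' x) x) (hf' : ∀ x ∈ s, HasDerivAt f' (f'' x) x)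
    (hne : ∀ x ∈ s, f' x ≠ 0) (hle : ∀ x ∈ s, f'' x * f x / f' x ^ 2 ≤ 1) :
    MonotoneOn (fun t => f t / f' t) s := by
  have hd : ∀ x ∈ s, HasDerivAt (fun t => f t / f' t) (1 - f'' x * f x / f' x ^ 2) x :=
    fun x hx => hasDerivAt_div_deriv (hf x hx) (hf' x hx) (hne x hx)
  refine monotoneOn_of_hasDerivWithinAt_nonneg hs
    (fun x hx => (hd x hx).continuousAt.continuousWithinAt)
    (fun x hx => (hd x (interior_subset hx)).hasDerivWithinAt) fun x hx => ?_
  linarith [hle x (interior_subset hx)]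

theorem le_mul_exp_of_deriv_le_mul {f f' : ℝ → ℝ} {K a b : ℝ} (hab : a ≤ b)
    (hf : ∀ x ∈ Icc a b, HasDerivAt f (f' x) x) (hle : ∀ x ∈ Ico a b, f' x ≤ K * f x) :
    f b ≤ f a * exp (K * (b - a)) := by
  have h := le_gronwallBound_of_liminf_deriv_right_le
    (fun x hx => (hf x hx).continuousAt.continuousWithinAt)
    (fun x hx _ hr => (hf x (Ico_subset_Icc_self hx)).hasDerivWithinAt.liminf_right_slope_le hr)
    le_rfl (fun x hx => (hle x hx).trans_eq (add_zero _).symm) b ⟨hab, le_rfl⟩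
  rwa [gronwallBound_ε0] at h

theorem le_mul_exp_of_ratio_le_one {f f' f'' : ℝ → ℝ} {a b x : ℝ}
    (hf : ∀ y ∈ Ico a b, HasDerivAt f (f' y) y) (hf' : ∀ y ∈ Ico a b, HasDerivAt f' (f'' y) y)
    (hpos : ∀ y ∈ Ico a b, 0 < f y) (hpos' : ∀ y ∈ Ico a b, 0 < f' y)
    (hle : ∀ y ∈ Ico a b, f'' y * f y / f' y ^ 2 ≤ 1) (hx : x ∈ Ico a b) :
    f x ≤ f a * exp (f' a / f a * (b - a)) := by
  have ha : a ∈ Ico a b := ⟨le_rfl, hx.1.trans_lt hx.2⟩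
  have hmono := monotoneOn_div_deriv_of_ratio_le_one (convex_Ico a b) hf hf'
    (fun y hy => (hpos' y hy).ne') hle
  have hlog_deriv_le : ∀ y ∈ Ico a b, f' y ≤ f' a / f a * f y := by
    intro y hy
    have h := hmono ha hy hy.1
    rw [div_le_div_iff₀ (hpos' a ha) (hpos' y hy)] at h
    rw [div_mul_eq_mul_div, le_div_iff₀ (hpos a ha)]
    linarith
  have hIcc : Icc a x ⊆ Ico a b := Icc_subset_Ico_right hx.2
  calc f x ≤ f a * exp (f' a / f a * (x - a)) :=
        le_mul_exp_of_deriv_le_mul hx.1 (fun y hy => hf y (hIcc hy))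
          fun y hy => hlog_deriv_le y (hIcc (Ico_subset_Icc_self hy))
    _ ≤ f a * exp (f' a / f a * (b - a)) := by
        have hK : 0 < f' a / f a := div_pos (hpos' a ha) (hpos a ha)
        gcongr
        · exact (hpos a ha).le
        · exact hx.2.le

theorem lambda_ge_one_of_diverging_general
    (c : ℝ) (hc : 0 < c) (Ω Ω' Ω'' : ℝ → ℝ)
    (hderiv : ∀ T ∈ Set.Ico (-c) (0:ℝ), HasDerivAt Ω (Ω' T) T)
    (hderiv' : ∀ T ∈ Set.Ico (-c) (0:ℝ), HasDerivAt Ω' (Ω'' T) T)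
    (hpos : ∀ T ∈ Set.Ico (-c) (0:ℝ), 0 < Ω T)
    (hpos' : ∀ T ∈ Set.Ico (-c) (0:ℝ), 0 < Ω' T)
    (hdiv : Tendsto Ω (𝓝[<] (0:ℝ)) atTop)
    (lam : EReal)
    (hlam : Tendsto (fun T => ((Ω'' T * Ω T / (Ω' T) ^ 2 : ℝ) : EReal))
      (𝓝[<] (0:ℝ)) (𝓝 lam)) :
    1 ≤ lam := by
  by_contra! hlt
  have hratio : ∀ᶠ T in 𝓝[<] (0:ℝ), T ∈ Ioo (-c) 0 ∧ Ω'' T * Ω T / Ω' T ^ 2 ≤ 1 := by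
    filter_upwards [Ioo_mem_nhdsLT (neg_lt_zero.2 hc), hlam.eventually_lt_const hlt] with T hT hlt1
    exact ⟨hT, mod_cast hlt1.le⟩
  obtain ⟨l, hl : l < 0, hsub⟩ := mem_nhdsLT_iff_exists_Ioo_subset.mp hratio
  have hmid : l < l / 2 ∧ l / 2 < 0 := ⟨by linarith, by linarith⟩
  have hIco : ∀ T ∈ Ico (l / 2) 0, T ∈ Ico (-c) 0 ∧ Ω'' T * Ω T / Ω' T ^ 2 ≤ 1 := fun T hT =>
    have h := hsub ⟨hmid.1.trans_le hT.1, hT.2⟩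
    ⟨Ioo_subset_Ico_self h.1, h.2⟩
  obtain ⟨T, hbig, hT⟩ := ((hdiv.eventually_gt_atTop
    (Ω (l / 2) * exp (Ω' (l / 2) / Ω (l / 2) * (0 - l / 2)))).and (Ico_mem_nhdsLT hmid.2)).exists
  exact hbig.not_ge <| le_mul_exp_of_ratio_le_one (fun y hy => hderiv y (hIco y hy).1)
    (fun y hy => hderiv' y (hIco y hy).1) (fun y hy => hpos y (hIco y hy).1)
    (fun y hy => hpos' y (hIco y hy).1) (fun y hy => (hIco y hy).2) hT

/-- Lemma B.1: if Ω is positive, strictly increasing and C² on [-c,0) with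
Ω → +∞ as T → 0⁻, and λ = lim_{T→0⁻} Ω''Ω/(Ω')² exists in the extended reals,
then λ ≥ 1. -/
theorem lambda_ge_one_of_diverging
    (c : ℝ) (hc : 0 < c) (Ω Ω' Ω'' : ℝ → ℝ)
    (hderiv : ∀ T ∈ Set.Ico (-c) (0:ℝ), HasDerivAt Ω (Ω' T) T)
    (hderiv' : ∀ T ∈ Set.Ico (-c) (0:ℝ), HasDerivAt Ω' (Ω'' T) T)
    (hcont : ContinuousOn Ω'' (Set.Ico (-c) 0))
    (hmono : StrictMonoOn Ω (Set.Ico (-c) 0))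
    (hpos : ∀ T ∈ Set.Ico (-c) (0:ℝ), 0 < Ω T)
    (hpos' : ∀ T ∈ Set.Ico (-c) (0:ℝ), 0 < Ω' T)
    (hdiv : Tendsto Ω (𝓝[<] (0:ℝ)) atTop)
    (lam : EReal)
    (hlam : Tendsto (fun T => ((Ω'' T * Ω T / (Ω' T) ^ 2 : ℝ) : EReal))
      (𝓝[<] (0:ℝ)) (𝓝 lam)) :
    1 ≤ lam :=
  lambda_ge_one_of_diverging_general c hc Ω Ω' Ω'' hderiv hderiv' hpos hpos' hdiv lam hlam
end

section
/- If Ω : [-c, 0] → ℝ (with c > 0) is continuous on [-c,0], strictly monotonically decreasing, positive, and C² on [-c,0), Ω(0) = 0, and λ = lim_{T→0⁻} Ω''(T)·Ω(T)/(Ω'(T))² exists (possibly infinite), then λ ≤ 1. -/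
open Filter Topology Set

/-! If `λ > 1`, then `Ω'' Ω ≥ Ω'²` near `0⁻`, i.e. `(log Ω)'' = (Ω'' Ω - Ω'²) / Ω² ≥ 0`, so `log Ω`
is convex on some interval `(a, 0)`. A convex function on a bounded open interval is bounded
below near its right endpoint (it lies above a secant line there), whereas `log Ω → -∞` at `0⁻`
because `Ω(0) = 0`. -/
theorem ConvexOn.not_tendsto_nhdsLT_atBot {f : ℝ → ℝ} {a b : ℝ} (hab : a < b)
    (hf : ConvexOn ℝ (Ioo a b) f) : ¬ Tendsto f (𝓝[<] b) atBot := by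
  obtain ⟨x, hax, hxb⟩ := exists_between hab
  obtain ⟨y, hxy, hyb⟩ := exists_between hxb
  set s := (f y - f x) / (y - x)
  have hbound : ∀ T ∈ Ioo y b, f y - |s| * (b - y) ≤ f T := by
    intro T ⟨hyT, hTb⟩
    have hslope : s ≤ (f T - f y) / (T - y) :=
      hf.slope_mono_adjacent ⟨hax, hxb⟩ ⟨by linarith, hTb⟩ hxy hyT
    rw [le_div_iff₀ (sub_pos.mpr hyT)] at hslope
    nlinarith [neg_abs_le s, abs_nonneg s]
  intro htends
  obtain ⟨T, hlt, hT⟩ :=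
    ((htends.eventually_lt_atBot (f y - |s| * (b - y))).and (Ioo_mem_nhdsLT hyb)).exists
  exact (hbound T hT).not_gt hlt

theorem convexOn_log_of_sq_deriv_le {D : Set ℝ} (hD : Convex ℝ D) {f f' f'' : ℝ → ℝ}
    (hf : ∀ x ∈ D, HasDerivAt f (f' x) x) (hf' : ∀ x ∈ D, HasDerivAt f' (f'' x) x)
    (hpos : ∀ x ∈ D, 0 < f x) (hsq : ∀ x ∈ interior D, f' x ^ 2 ≤ f'' x * f x) :
    ConvexOn ℝ D (fun x => Real.log (f x)) := by
  have hlog : ∀ x ∈ D, HasDerivAt (fun x => Real.log (f x)) (f' x / f x) x :=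
    fun x hx => (hf x hx).log (hpos x hx).ne'
  have hlog' : ∀ x ∈ D, HasDerivAt (fun x => f' x / f x)
      ((f'' x * f x - f' x * f' x) / f x ^ 2) x :=
    fun x hx => (hf' x hx).div (hf x hx) (hpos x hx).ne'
  refine convexOn_of_hasDerivWithinAt2_nonneg hD
    (fun x hx => (hlog x hx).continuousAt.continuousWithinAt)
    (fun x hx => (hlog x (interior_subset hx)).hasDerivWithinAt)
    (fun x hx => (hlog' x (interior_subset hx)).hasDerivWithinAt)
    fun x hx => div_nonneg (by nlinarith [hsq x hx]) (sq_nonneg _)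

theorem lambda_le_one_of_vanishing_general
    (c : ℝ) (hc : 0 < c) (Ω Ω' Ω'' : ℝ → ℝ)
    (hcontΩ : ContinuousOn Ω (Set.Icc (-c) 0))
    (hderiv : ∀ T ∈ Set.Ico (-c) (0:ℝ), HasDerivAt Ω (Ω' T) T)
    (hderiv' : ∀ T ∈ Set.Ico (-c) (0:ℝ), HasDerivAt Ω' (Ω'' T) T)
    (hpos : ∀ T ∈ Set.Ico (-c) (0:ℝ), 0 < Ω T)
    (hneg' : ∀ T ∈ Set.Ico (-c) (0:ℝ), Ω' T < 0)
    (hzero : Ω 0 = 0)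
    (lam : EReal)
    (hlam : Tendsto (fun T => ((Ω'' T * Ω T / (Ω' T) ^ 2 : ℝ) : EReal))
      (𝓝[<] (0:ℝ)) (𝓝 lam)) :
    lam ≤ 1 := by
  by_contra! hgt
  have hnear : Ioo (-c) 0 ∈ 𝓝[<] (0:ℝ) := Ioo_mem_nhdsLT (by linarith)
  have hsq_le : ∀ᶠ T in 𝓝[<] (0:ℝ), T ∈ Ioo (-c) 0 ∧ Ω' T ^ 2 ≤ Ω'' T * Ω T := by
    filter_upwards [hnear, hlam.eventually_const_lt hgt] with T hT hL
    have hT' : T ∈ Ico (-c) 0 := Ioo_subset_Ico_self hT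
    have hL : (1 : ℝ) < Ω'' T * Ω T / Ω' T ^ 2 := by exact_mod_cast hL
    rw [lt_div_iff₀ (pow_two_pos_of_ne_zero (hneg' T hT').ne)] at hL
    exact ⟨hT, by linarith⟩
  obtain ⟨a, ha0, hsub⟩ := mem_nhdsLT_iff_exists_Ioo_subset.mp hsq_le
  have hsubIco : ∀ T ∈ Ioo a 0, T ∈ Ico (-c) 0 := fun T hT => Ioo_subset_Ico_self (hsub hT).1
  have hconvex : ConvexOn ℝ (Ioo a 0) fun T => Real.log (Ω T) :=
    convexOn_log_of_sq_deriv_le (convex_Ioo a 0) (fun T hT => hderiv T (hsubIco T hT))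
      (fun T hT => hderiv' T (hsubIco T hT)) (fun T hT => hpos T (hsubIco T hT))
      (fun T hT => (hsub (interior_subset hT)).2)
  have hΩ : Tendsto Ω (𝓝[<] 0) (𝓝[>] 0) := by
    refine tendsto_nhdsWithin_iff.mpr ⟨?_, ?_⟩
    · have := (hcontΩ 0 ⟨by linarith, le_rfl⟩).tendsto
      rw [hzero] at this
      exact this.mono_left (nhdsWithin_le_of_mem (mem_of_superset hnear Ioo_subset_Icc_self))
    · filter_upwards [hnear] with T hT using hpos T (Ioo_subset_Ico_self hT)
  exact hconvex.not_tendsto_nhdsLT_atBot ha0 (Real.tendsto_log_nhdsGT_zero.comp hΩ)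

/-- Lemma B.2: if Ω is continuous on [-c,0], positive, strictly decreasing and
C² on [-c,0), Ω(0) = 0, and λ = lim_{T→0⁻} Ω''Ω/(Ω')² exists in the extended
reals, then λ ≤ 1. -/
theorem lambda_le_one_of_vanishing
    (c : ℝ) (hc : 0 < c) (Ω Ω' Ω'' : ℝ → ℝ)
    (hcontΩ : ContinuousOn Ω (Set.Icc (-c) 0))
    (hderiv : ∀ T ∈ Set.Ico (-c) (0:ℝ), HasDerivAt Ω (Ω' T) T)
    (hderiv' : ∀ T ∈ Set.Ico (-c) (0:ℝ), HasDerivAt Ω' (Ω'' T) T)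
    (hcont : ContinuousOn Ω'' (Set.Ico (-c) 0))
    (hanti : StrictAntiOn Ω (Set.Ico (-c) 0))
    (hpos : ∀ T ∈ Set.Ico (-c) (0:ℝ), 0 < Ω T)
    (hneg' : ∀ T ∈ Set.Ico (-c) (0:ℝ), Ω' T < 0)
    (hzero : Ω 0 = 0)
    (lam : EReal)
    (hlam : Tendsto (fun T => ((Ω'' T * Ω T / (Ω' T) ^ 2 : ℝ) : EReal))
      (𝓝[<] (0:ℝ)) (𝓝 lam)) :
    lam ≤ 1 :=
  lambda_le_one_of_vanishing_general c hc Ω Ω' Ω'' hcontΩ hderiv hderiv' hpos hneg' hzero lam hlam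
end

section
/- Let Ω be positive, strictly monotonically increasing, and C² on [-c, 0) with c > 0, with Ω'(T) > 0 on [-c,0), Ω(T) → +∞ as T → 0⁻, and suppose λ = lim_{T→0⁻} Ω''Ω/(Ω')² exists with λ ≠ 1. Then the limit of Ω'(T)/Ω(T) as T → 0⁻ exists and equals +∞. -/
/-!
Write `r = Ω'/Ω = (log Ω)'` and `L = Ω''Ω/Ω'²`. Since `log Ω → ∞` at `0⁻`, its derivative `r`
cannot be bounded above on any interval `[a, 0)`. On the other hand `r' = r² (L - 1)`, so near `0`
the sign of `r'` is that of `λ - 1`. If `λ < 1`, then `r` is eventually decreasing, hence bounded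
above, which is impossible; so `λ > 1`, `r` is eventually increasing, and being unbounded it tends
to `+∞`.
-/

open Filter Topology Set

section Monotonicity

variable {f f' : ℝ → ℝ} {D : Set ℝ}

theorem Convex.monotoneOn_of_hasDerivAt_nonneg (hD : Convex ℝ D)
    (hf : ∀ x ∈ D, HasDerivAt f (f' x) x) (hf' : ∀ x ∈ D, 0 ≤ f' x) : MonotoneOn f D :=
  monotoneOn_of_hasDerivWithinAt_nonneg hD (fun x hx => (hf x hx).continuousAt.continuousWithinAt)
    (fun x hx => (hf x (interior_subset hx)).hasDerivWithinAt) fun x hx => hf' x (interior_subset hx)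

theorem Convex.antitoneOn_of_hasDerivAt_nonpos (hD : Convex ℝ D)
    (hf : ∀ x ∈ D, HasDerivAt f (f' x) x) (hf' : ∀ x ∈ D, f' x ≤ 0) : AntitoneOn f D :=
  antitoneOn_of_hasDerivWithinAt_nonpos hD (fun x hx => (hf x hx).continuousAt.continuousWithinAt)
    (fun x hx => (hf x (interior_subset hx)).hasDerivWithinAt) fun x hx => hf' x (interior_subset hx)

end Monotonicity

section LeftLimit

variable {f f' : ℝ → ℝ} {a b : ℝ}

theorem not_tendsto_atTop_of_hasDerivAt_le (hab : a < b)
    (hf : ∀ t ∈ Ico a b, HasDerivAt f (f' t) t) {M : ℝ} (hM : ∀ t ∈ Ico a b, f' t ≤ M) :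
    ¬ Tendsto f (𝓝[<] b) atTop := by
  intro hlim
  have hanti : AntitoneOn (fun t => f t + -M * t) (Ico a b) :=
    (convex_Ico a b).antitoneOn_of_hasDerivAt_nonpos
      (fun t ht => (hf t ht).add ((hasDerivAt_id t).const_mul (-M)))
      fun t ht => by linarith [hM t ht]
  have hlim' : Tendsto (fun t => f t + -M * t) (𝓝[<] b) atTop :=
    hlim.atTop_add (continuous_const.mul continuous_id).continuousWithinAt.tendsto
  obtain ⟨t, hlarge, ht⟩ :=
    ((hlim'.eventually_gt_atTop (f a + -M * a)).and (Ico_mem_nhdsLT hab)).exists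
  exact (hanti ⟨le_rfl, hab⟩ ht ht.1).not_gt hlarge

theorem exists_lt_div_of_tendsto_atTop (hab : a < b) (hf : ∀ t ∈ Ico a b, HasDerivAt f (f' t) t)
    (hpos : ∀ t ∈ Ico a b, 0 < f t) (hlim : Tendsto f (𝓝[<] b) atTop) (M : ℝ) :
    ∃ t ∈ Ico a b, M < f' t / f t := by
  by_contra! hM
  exact not_tendsto_atTop_of_hasDerivAt_le hab (fun t ht => (hf t ht).log (hpos t ht).ne') hM
    (Real.tendsto_log_atTop.comp hlim)

theorem tendsto_atTop_of_monotoneOn_Ico {r : ℝ → ℝ} (hr : MonotoneOn r (Ico a b))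
    (hunb : ∀ M, ∃ t ∈ Ico a b, M < r t) : Tendsto r (𝓝[<] b) atTop := by
  refine tendsto_atTop.2 fun M => ?_
  obtain ⟨s, hs, hMs⟩ := hunb M
  filter_upwards [Ico_mem_nhdsLT hs.2] with t ht
  exact hMs.le.trans (hr hs ⟨hs.1.trans ht.1, ht.2⟩ ht.1)

end LeftLimit

theorem hasDerivAt_div_eq_sq_mul_sub_one {f f' f'' : ℝ → ℝ} {t : ℝ}
    (hf : HasDerivAt f (f' t) t) (hf' : HasDerivAt f' (f'' t) t) (h₀ : f t ≠ 0) (h₁ : f' t ≠ 0) :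
    HasDerivAt (fun s => f' s / f s) ((f' t / f t) ^ 2 * (f'' t * f t / f' t ^ 2 - 1)) t :=
  (hf'.div hf h₀).congr_deriv (by field_simp)

theorem ratio_tendsto_atTop_of_diverging_general
    (c : ℝ) (hc : 0 < c) (Ω Ω' Ω'' : ℝ → ℝ)
    (hderiv : ∀ T ∈ Set.Ico (-c) (0:ℝ), HasDerivAt Ω (Ω' T) T)
    (hderiv' : ∀ T ∈ Set.Ico (-c) (0:ℝ), HasDerivAt Ω' (Ω'' T) T)
    (hpos : ∀ T ∈ Set.Ico (-c) (0:ℝ), 0 < Ω T)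
    (hpos' : ∀ T ∈ Set.Ico (-c) (0:ℝ), 0 < Ω' T)
    (hdiv : Tendsto Ω (𝓝[<] (0:ℝ)) atTop)
    (lam : EReal)
    (hlam : Tendsto (fun T => ((Ω'' T * Ω T / (Ω' T) ^ 2 : ℝ) : EReal))
      (𝓝[<] (0:ℝ)) (𝓝 lam))
    (hlam1 : lam ≠ 1) :
    Tendsto (fun T => Ω' T / Ω T) (𝓝[<] (0:ℝ)) atTop := by
  set r := fun T => Ω' T / Ω T
  set L := fun T => Ω'' T * Ω T / Ω' T ^ 2
  have hr : ∀ t ∈ Ico (-c) 0, HasDerivAt r (r t ^ 2 * (L t - 1)) t := fun t ht =>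
    hasDerivAt_div_eq_sq_mul_sub_one (hderiv t ht) (hderiv' t ht) (hpos t ht).ne' (hpos' t ht).ne'
  have hunb : ∀ a ∈ Ico (-c) 0, ∀ M, ∃ t ∈ Ico a 0, M < r t := fun a ha =>
    have hsub : Ico a 0 ⊆ Ico (-c) 0 := Ico_subset_Ico_left ha.1
    exists_lt_div_of_tendsto_atTop ha.2 (fun t ht => hderiv t (hsub ht))
      (fun t ht => hpos t (hsub ht)) hdiv
  have hlocal : ∀ P : ℝ → Prop, (∀ᶠ T in 𝓝[<] (0:ℝ), P T) →
      ∃ a ∈ Ico (-c) 0, ∀ t ∈ Ico a 0, t ∈ Ico (-c) 0 ∧ P t := fun P hP =>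
    have hIco : Ico (-c) 0 ∈ 𝓝[<] (0:ℝ) := Ico_mem_nhdsLT (neg_neg_of_pos hc)
    let ⟨a, ha, hsub⟩ := mem_nhdsLT_iff_exists_Ico_subset.1 (inter_mem hIco hP)
    ⟨a, (hsub ⟨le_rfl, ha⟩).1, hsub⟩
  rcases hlam1.lt_or_gt with hlt | hgt
  · obtain ⟨a, ha, hloc⟩ := hlocal _ (hlam.eventually_lt_const hlt)
    have hanti : AntitoneOn r (Ico a 0) :=
      (convex_Ico a 0).antitoneOn_of_hasDerivAt_nonpos (fun t ht => hr t (hloc t ht).1)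
        fun t ht => mul_nonpos_of_nonneg_of_nonpos (sq_nonneg _)
          (sub_nonpos.2 (mod_cast (hloc t ht).2 : L t < 1).le)
    obtain ⟨t, ht, hlarge⟩ := hunb a ha (r a)
    exact absurd (hanti ⟨le_rfl, ha.2⟩ ht ht.1) hlarge.not_ge
  · obtain ⟨a, ha, hloc⟩ := hlocal _ (hlam.eventually_const_lt hgt)
    have hmono : MonotoneOn r (Ico a 0) :=
      (convex_Ico a 0).monotoneOn_of_hasDerivAt_nonneg (fun t ht => hr t (hloc t ht).1)
        fun t ht => mul_nonneg (sq_nonneg _) (sub_nonneg.2 (mod_cast (hloc t ht).2 : 1 < L t).le)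
    exact tendsto_atTop_of_monotoneOn_Ico hmono (hunb a ha)

/-- Lemma B.4: if Ω is positive, strictly increasing and C² on [-c,0) with
Ω → +∞ as T → 0⁻, and λ = lim_{T→0⁻} Ω''Ω/(Ω')² exists with λ ≠ 1, then
Ω'/Ω → +∞ as T → 0⁻. -/
theorem ratio_tendsto_atTop_of_diverging
    (c : ℝ) (hc : 0 < c) (Ω Ω' Ω'' : ℝ → ℝ)
    (hderiv : ∀ T ∈ Set.Ico (-c) (0:ℝ), HasDerivAt Ω (Ω' T) T)
    (hderiv' : ∀ T ∈ Set.Ico (-c) (0:ℝ), HasDerivAt Ω' (Ω'' T) T)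
    (hcont : ContinuousOn Ω'' (Set.Ico (-c) 0))
    (hmono : StrictMonoOn Ω (Set.Ico (-c) 0))
    (hpos : ∀ T ∈ Set.Ico (-c) (0:ℝ), 0 < Ω T)
    (hpos' : ∀ T ∈ Set.Ico (-c) (0:ℝ), 0 < Ω' T)
    (hdiv : Tendsto Ω (𝓝[<] (0:ℝ)) atTop)
    (lam : EReal)
    (hlam : Tendsto (fun T => ((Ω'' T * Ω T / (Ω' T) ^ 2 : ℝ) : EReal))
      (𝓝[<] (0:ℝ)) (𝓝 lam))
    (hlam1 : lam ≠ 1) :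
    Tendsto (fun T => Ω' T / Ω T) (𝓝[<] (0:ℝ)) atTop :=
  ratio_tendsto_atTop_of_diverging_general c hc Ω Ω' Ω'' hderiv hderiv' hpos hpos' hdiv lam hlam
    hlam1
end

section
/- Let Ω be positive, strictly monotonically decreasing, and C² on [-c, 0) with c > 0, with Ω'(T) < 0 on [-c,0), continuous on [-c,0] with Ω(0) = 0, and suppose λ = lim_{T→0⁻} Ω''Ω/(Ω')² exists with λ ≠ 1. Then the limit of Ω'(T)/Ω(T) as T → 0⁻ exists and equals -∞. -/
/-!
Write `g = Ω'/Ω`. Comparing `Ω` with `Ω(a) exp(M(T - a))` shows that `Ω' ≥ M Ω` cannot hold on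
a whole left neighbourhood of `0`, since `Ω` would then stay away from `Ω(0) = 0`; hence `g` takes
arbitrarily negative values near `0`. On the other hand `g' = (L - 1) g²`, so `g` is eventually
monotone: decreasing if `λ < 1`, which forces `g → -∞`, and increasing if `λ > 1`, which keeps
`g` bounded below and is therefore impossible.
-/

open Filter Topology Set Real

theorem mul_exp_le_of_mul_le_deriv {f f' : ℝ → ℝ} {a b M : ℝ} (hab : a ≤ b)
    (hf : ContinuousOn f (Icc a b)) (hf' : ∀ x ∈ Ioo a b, HasDerivAt f (f' x) x)
    (hle : ∀ x ∈ Ioo a b, M * f x ≤ f' x) :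
    f a * exp (-(M * a)) ≤ f b * exp (-(M * b)) := by
  have hderiv : ∀ x ∈ Ioo a b, HasDerivAt (fun x => f x * exp (-(M * x)))
      ((f' x - M * f x) * exp (-(M * x))) x := fun x hx =>
    ((hf' x hx).mul ((hasDerivAt_id x).const_mul M).neg.exp).congr_deriv
      (by simp only [id, Pi.neg_apply]; ring)
  have hmono : MonotoneOn (fun x => f x * exp (-(M * x))) (Icc a b) :=
    monotoneOn_of_hasDerivWithinAt_nonneg (convex_Icc a b) (hf.mul (by fun_prop))
      (by rw [interior_Icc]; exact fun x hx => (hderiv x hx).hasDerivWithinAt)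
      (by rw [interior_Icc]; exact fun x hx => mul_nonneg (sub_nonneg.2 (hle x hx)) (exp_pos _).le)
  exact hmono (left_mem_Icc.2 hab) (right_mem_Icc.2 hab) hab

theorem frequently_deriv_div_lt_nhdsLT {f f' : ℝ → ℝ} {a b : ℝ} (hab : a < b)
    (hf : ContinuousOn f (Icc a b)) (hf' : ∀ x ∈ Ico a b, HasDerivAt f (f' x) x)
    (hpos : ∀ x ∈ Ico a b, 0 < f x) (hb : f b = 0) (M : ℝ) :
    ∃ᶠ x in 𝓝[<] b, f' x / f x < M := by
  refine frequently_iff.2 fun {U} hU => ?_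
  obtain ⟨l, hl, hlU⟩ := (mem_nhdsLT_iff_exists_mem_Ico_Ioo_subset hab).1 hU
  by_contra! hge
  have hsub : Ioo l b ⊆ Ico a b := Ioo_subset_Ico_self.trans (Ico_subset_Ico_left hl.1)
  have hcomp := mul_exp_le_of_mul_le_deriv hl.2.le (hf.mono (Icc_subset_Icc_left hl.1))
    (fun x hx => hf' x (hsub hx))
    (fun x hx => (le_div_iff₀ (hpos x (hsub hx))).1 (hge x (hlU hx)))
  rw [hb, zero_mul] at hcomp
  exact (mul_pos (hpos l hl) (exp_pos _)).not_ge hcomp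

theorem AntitoneOn.tendsto_atBot_nhdsLT {α β : Type*} [LinearOrder α] [TopologicalSpace α]
    [OrderTopology α] [Preorder β] {g : α → β} {s : Set α} {b : α} (hg : AntitoneOn g s)
    (hs : s ∈ 𝓝[<] b) (hfreq : ∀ M, ∃ᶠ x in 𝓝[<] b, g x < M) :
    Tendsto g (𝓝[<] b) atBot := by
  refine tendsto_atBot.2 fun M => ?_
  obtain ⟨x, hxM, hxs, hxb⟩ :=
    ((hfreq M).and_eventually (inter_mem hs self_mem_nhdsWithin)).exists
  filter_upwards [hs, Ioo_mem_nhdsLT hxb] with y hys hy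
  exact (hg hxs hys hy.1.le).trans hxM.le

theorem strictAntiOn_Ioo_of_hasDerivAt_neg {g g' : ℝ → ℝ} {a b : ℝ}
    (hg : ∀ x ∈ Ioo a b, HasDerivAt g (g' x) x) (hneg : ∀ x ∈ Ioo a b, g' x < 0) :
    StrictAntiOn g (Ioo a b) :=
  strictAntiOn_of_hasDerivWithinAt_neg (convex_Ioo a b)
    (fun x hx => (hg x hx).continuousAt.continuousWithinAt)
    (by rw [interior_Ioo]; exact fun x hx => (hg x hx).hasDerivWithinAt)
    (by rwa [interior_Ioo])

theorem strictMonoOn_Ioo_of_hasDerivAt_pos {g g' : ℝ → ℝ} {a b : ℝ}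
    (hg : ∀ x ∈ Ioo a b, HasDerivAt g (g' x) x) (hpos : ∀ x ∈ Ioo a b, 0 < g' x) :
    StrictMonoOn g (Ioo a b) :=
  strictMonoOn_of_hasDerivWithinAt_pos (convex_Ioo a b)
    (fun x hx => (hg x hx).continuousAt.continuousWithinAt)
    (by rw [interior_Ioo]; exact fun x hx => (hg x hx).hasDerivWithinAt)
    (by rwa [interior_Ioo])

theorem hasDerivAt_deriv_div_self {f f' f'' : ℝ → ℝ} {x : ℝ} (hf : HasDerivAt f (f' x) x)
    (hf' : HasDerivAt f' (f'' x) x) (hfx : f x ≠ 0) (hf'x : f' x ≠ 0) :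
    HasDerivAt (fun y => f' y / f y) ((f'' x * f x / f' x ^ 2 - 1) * (f' x / f x) ^ 2) x :=
  (hf'.div hf hfx).congr_deriv (by field_simp)

theorem ratio_tendsto_atBot_of_vanishing_general
    (c : ℝ) (hc : 0 < c) (Ω Ω' Ω'' : ℝ → ℝ)
    (hcontΩ : ContinuousOn Ω (Set.Icc (-c) 0))
    (hderiv : ∀ T ∈ Set.Ico (-c) (0:ℝ), HasDerivAt Ω (Ω' T) T)
    (hderiv' : ∀ T ∈ Set.Ico (-c) (0:ℝ), HasDerivAt Ω' (Ω'' T) T)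
    (hpos : ∀ T ∈ Set.Ico (-c) (0:ℝ), 0 < Ω T)
    (hneg' : ∀ T ∈ Set.Ico (-c) (0:ℝ), Ω' T < 0)
    (hzero : Ω 0 = 0)
    (lam : EReal)
    (hlam : Tendsto (fun T => ((Ω'' T * Ω T / (Ω' T) ^ 2 : ℝ) : EReal))
      (𝓝[<] (0:ℝ)) (𝓝 lam))
    (hlam1 : lam ≠ 1) :
    Tendsto (fun T => Ω' T / Ω T) (𝓝[<] (0:ℝ)) atBot := by
  have hc' : -c < 0 := neg_lt_zero.2 hc
  have hfreq := frequently_deriv_div_lt_nhdsLT hc' hcontΩ hderiv hpos hzero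
  have hg' : ∀ T ∈ Ico (-c) 0, HasDerivAt (fun T => Ω' T / Ω T)
      ((Ω'' T * Ω T / Ω' T ^ 2 - 1) * (Ω' T / Ω T) ^ 2) T := fun T hT =>
    hasDerivAt_deriv_div_self (hderiv T hT) (hderiv' T hT) (hpos T hT).ne' (hneg' T hT).ne
  have hsq : ∀ T ∈ Ico (-c) 0, 0 < (Ω' T / Ω T) ^ 2 := fun T hT =>
    sq_pos_of_neg (div_neg_of_neg_of_pos (hneg' T hT) (hpos T hT))
  rcases hlam1.lt_or_gt with hlt | hgt
  · have hL : ∀ᶠ T in 𝓝[<] (0:ℝ), T ∈ Ico (-c) 0 ∧ Ω'' T * Ω T / Ω' T ^ 2 < 1 := by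
      filter_upwards [Ioo_mem_nhdsLT hc', hlam.eventually (eventually_lt_nhds hlt)] with T hT hLT
      exact ⟨Ioo_subset_Ico_self hT, by exact_mod_cast hLT⟩
    obtain ⟨a, ha, hsub⟩ := mem_nhdsLT_iff_exists_Ioo_subset.1 hL
    have hanti := strictAntiOn_Ioo_of_hasDerivAt_neg (fun T hT => hg' T (hsub hT).1)
      fun T hT => mul_neg_of_neg_of_pos (sub_neg.2 (hsub hT).2) (hsq T (hsub hT).1)
    exact hanti.antitoneOn.tendsto_atBot_nhdsLT (Ioo_mem_nhdsLT ha) hfreq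
  · have hL : ∀ᶠ T in 𝓝[<] (0:ℝ), T ∈ Ico (-c) 0 ∧ 1 < Ω'' T * Ω T / Ω' T ^ 2 := by
      filter_upwards [Ioo_mem_nhdsLT hc', hlam.eventually (eventually_gt_nhds hgt)] with T hT hLT
      exact ⟨Ioo_subset_Ico_self hT, by exact_mod_cast hLT⟩
    obtain ⟨a, ha, hsub⟩ := mem_nhdsLT_iff_exists_Ioo_subset.1 hL
    have hmono := strictMonoOn_Ioo_of_hasDerivAt_pos (fun T hT => hg' T (hsub hT).1)
      fun T hT => mul_pos (sub_pos.2 (hsub hT).2) (hsq T (hsub hT).1)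
    have ha2 : a / 2 ∈ Ioo a 0 := by constructor <;> linarith [mem_Iio.1 ha]
    obtain ⟨T, hTlt, hT⟩ := ((hfreq (Ω' (a / 2) / Ω (a / 2))).and_eventually
      (Ioo_mem_nhdsLT ha2.2)).exists
    exact absurd hTlt (hmono ha2 ⟨ha2.1.trans hT.1, hT.2⟩ hT.1).not_gt

/-- Lemma B.5: if Ω is continuous on [-c,0], positive, strictly decreasing and
C² on [-c,0) with Ω' < 0, Ω(0) = 0, and λ = lim_{T→0⁻} Ω''Ω/(Ω')² exists with
λ ≠ 1, then Ω'/Ω → -∞ as T → 0⁻. -/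
theorem ratio_tendsto_atBot_of_vanishing
    (c : ℝ) (hc : 0 < c) (Ω Ω' Ω'' : ℝ → ℝ)
    (hcontΩ : ContinuousOn Ω (Set.Icc (-c) 0))
    (hderiv : ∀ T ∈ Set.Ico (-c) (0:ℝ), HasDerivAt Ω (Ω' T) T)
    (hderiv' : ∀ T ∈ Set.Ico (-c) (0:ℝ), HasDerivAt Ω' (Ω'' T) T)
    (hcont : ContinuousOn Ω'' (Set.Ico (-c) 0))
    (hanti : StrictAntiOn Ω (Set.Ico (-c) 0))
    (hpos : ∀ T ∈ Set.Ico (-c) (0:ℝ), 0 < Ω T)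
    (hneg' : ∀ T ∈ Set.Ico (-c) (0:ℝ), Ω' T < 0)
    (hzero : Ω 0 = 0)
    (lam : EReal)
    (hlam : Tendsto (fun T => ((Ω'' T * Ω T / (Ω' T) ^ 2 : ℝ) : EReal))
      (𝓝[<] (0:ℝ)) (𝓝 lam))
    (hlam1 : lam ≠ 1) :
    Tendsto (fun T => Ω' T / Ω T) (𝓝[<] (0:ℝ)) atBot :=
  ratio_tendsto_atBot_of_vanishing_general c hc Ω Ω' Ω'' hcontΩ hderiv hderiv' hpos hneg' hzero lam
    hlam hlam1
end

section
/- Let Ω be positive, strictly monotonically increasing, and C² on [-c,0) with Ω'(T) > 0, and Ω(T) → +∞ as T → 0⁻. Suppose λ = lim_{T→0⁻} Ω''Ω/(Ω')² exists with λ ≠ 1 and λ ≠ 2. Then M(T) = Ω'(T)/Ω(T)² has a limit κ as T → 0⁻ (in the extended nonnegative reals), with 0 < κ ≤ +∞ if λ > 2 and 0 ≤ κ < +∞ if λ < 2. -/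
/-!
The quotient rule gives `M' = (L - 2) Ω'² / Ω³`, so near `0⁻` the sign of `M'` is that of `λ - 2`
and `M` is monotone there. Hence `M` has a limit in `EReal`, nonnegative since `M > 0`. For
`λ > 2` the limit lies above the (positive) values of `M` near `0`, for `λ < 2` below its (finite)
values.
-/

open Filter Topology Set

theorem hasDerivAt_div_sq {f f' f'' : ℝ → ℝ} {x : ℝ} (hf : HasDerivAt f (f' x) x)
    (hf' : HasDerivAt f' (f'' x) x) (hx : f x ≠ 0) :
    HasDerivAt (fun y => f' y / f y ^ 2) ((f'' x * f x - 2 * f' x ^ 2) / f x ^ 3) x := by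
  refine (hf'.div (hf.pow 2) (pow_ne_zero 2 hx)).congr_deriv ?_
  simp only [Pi.pow_apply]
  field_simp
  ring

theorem MonotoneOn.exists_tendsto_nhdsLT_ereal {g : ℝ → ℝ} {l a : ℝ} (hla : l < a)
    (hg : MonotoneOn g (Ioo l a)) :
    ∃ κ : EReal, Tendsto (fun x => (g x : EReal)) (𝓝[<] a) (𝓝 κ) ∧
      ∀ᶠ x in 𝓝[<] a, (g x : EReal) ≤ κ :=
  ⟨_, (EReal.coe_strictMono.monotone.comp_monotoneOn hg).tendsto_nhdsWithin_Ioo_left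
    (nonempty_Ioo.2 hla) (OrderTop.bddAbove _),
    eventually_of_mem (Ioo_mem_nhdsLT hla) fun x hx => le_sSup ⟨x, hx, rfl⟩⟩

theorem AntitoneOn.exists_tendsto_nhdsLT_ereal {g : ℝ → ℝ} {l a : ℝ} (hla : l < a)
    (hg : AntitoneOn g (Ioo l a)) :
    ∃ κ : EReal, Tendsto (fun x => (g x : EReal)) (𝓝[<] a) (𝓝 κ) ∧
      ∀ᶠ x in 𝓝[<] a, κ ≤ g x :=
  ⟨_, (EReal.coe_strictMono.monotone.comp_antitoneOn hg).tendsto_nhdsWithin_Ioo_left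
    (nonempty_Ioo.2 hla) (OrderBot.bddBelow _),
    eventually_of_mem (Ioo_mem_nhdsLT hla) fun x hx => sInf_le ⟨x, hx, rfl⟩⟩

section DivSq

variable {f f' f'' : ℝ → ℝ} {l a : ℝ}

theorem strictMonoOn_div_sq (hf : ∀ x ∈ Ioo l a, HasDerivAt f (f' x) x)
    (hf' : ∀ x ∈ Ioo l a, HasDerivAt f' (f'' x) x) (hpos : ∀ x ∈ Ioo l a, 0 < f x)
    (hL : ∀ x ∈ Ioo l a, 2 * f' x ^ 2 < f'' x * f x) :
    StrictMonoOn (fun x => f' x / f x ^ 2) (Ioo l a) := by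
  have hM x (hx : x ∈ Ioo l a) := hasDerivAt_div_sq (hf x hx) (hf' x hx) (hpos x hx).ne'
  refine strictMonoOn_of_deriv_pos (convex_Ioo l a)
    (fun x hx => (hM x hx).continuousAt.continuousWithinAt) fun x hx => ?_
  rw [interior_Ioo] at hx
  rw [(hM x hx).deriv]
  have := hpos x hx
  exact div_pos (by linarith [hL x hx]) (by positivity)

theorem strictAntiOn_div_sq (hf : ∀ x ∈ Ioo l a, HasDerivAt f (f' x) x)
    (hf' : ∀ x ∈ Ioo l a, HasDerivAt f' (f'' x) x) (hpos : ∀ x ∈ Ioo l a, 0 < f x)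
    (hL : ∀ x ∈ Ioo l a, f'' x * f x < 2 * f' x ^ 2) :
    StrictAntiOn (fun x => f' x / f x ^ 2) (Ioo l a) := by
  have hM x (hx : x ∈ Ioo l a) := hasDerivAt_div_sq (hf x hx) (hf' x hx) (hpos x hx).ne'
  refine strictAntiOn_of_deriv_neg (convex_Ioo l a)
    (fun x hx => (hM x hx).continuousAt.continuousWithinAt) fun x hx => ?_
  rw [interior_Ioo] at hx
  rw [(hM x hx).deriv]
  have := hpos x hx
  exact div_neg_of_neg_of_pos (by linarith [hL x hx]) (by positivity)

theorem exists_tendsto_nhdsLT_div_sq_of_two_lt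
    (h : ∀ᶠ x in 𝓝[<] a, HasDerivAt f (f' x) x ∧ HasDerivAt f' (f'' x) x ∧ 0 < f x ∧
      2 * f' x ^ 2 < f'' x * f x) :
    ∃ κ : EReal, Tendsto (fun x => ((f' x / f x ^ 2 : ℝ) : EReal)) (𝓝[<] a) (𝓝 κ) ∧
      ∀ᶠ x in 𝓝[<] a, ((f' x / f x ^ 2 : ℝ) : EReal) ≤ κ := by
  obtain ⟨l, hl : l < a, hsub⟩ := mem_nhdsLT_iff_exists_Ioo_subset.1 h
  exact (strictMonoOn_div_sq (fun x hx => (hsub hx).1) (fun x hx => (hsub hx).2.1)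
    (fun x hx => (hsub hx).2.2.1) fun x hx => (hsub hx).2.2.2).monotoneOn
    |>.exists_tendsto_nhdsLT_ereal hl

theorem exists_tendsto_nhdsLT_div_sq_of_lt_two
    (h : ∀ᶠ x in 𝓝[<] a, HasDerivAt f (f' x) x ∧ HasDerivAt f' (f'' x) x ∧ 0 < f x ∧
      f'' x * f x < 2 * f' x ^ 2) :
    ∃ κ : EReal, Tendsto (fun x => ((f' x / f x ^ 2 : ℝ) : EReal)) (𝓝[<] a) (𝓝 κ) ∧
      ∀ᶠ x in 𝓝[<] a, κ ≤ ((f' x / f x ^ 2 : ℝ) : EReal) := by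
  obtain ⟨l, hl : l < a, hsub⟩ := mem_nhdsLT_iff_exists_Ioo_subset.1 h
  exact (strictAntiOn_div_sq (fun x hx => (hsub hx).1) (fun x hx => (hsub hx).2.1)
    (fun x hx => (hsub hx).2.2.1) fun x hx => (hsub hx).2.2.2).antitoneOn
    |>.exists_tendsto_nhdsLT_ereal hl

end DivSq

theorem M_limit_exists_of_diverging_general
    (c : ℝ) (hc : 0 < c) (Ω Ω' Ω'' : ℝ → ℝ)
    (hderiv : ∀ T ∈ Set.Ico (-c) (0:ℝ), HasDerivAt Ω (Ω' T) T)
    (hderiv' : ∀ T ∈ Set.Ico (-c) (0:ℝ), HasDerivAt Ω' (Ω'' T) T)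
    (hpos : ∀ T ∈ Set.Ico (-c) (0:ℝ), 0 < Ω T)
    (hpos' : ∀ T ∈ Set.Ico (-c) (0:ℝ), 0 < Ω' T)
    (lam : EReal)
    (hlam : Tendsto (fun T => ((Ω'' T * Ω T / (Ω' T) ^ 2 : ℝ) : EReal))
      (𝓝[<] (0:ℝ)) (𝓝 lam))
    (hlam2 : lam ≠ 2) :
    ∃ κ : EReal,
      Tendsto (fun T => ((Ω' T / (Ω T) ^ 2 : ℝ) : EReal)) (𝓝[<] (0:ℝ)) (𝓝 κ) ∧
      0 ≤ κ ∧ (2 < lam → 0 < κ) ∧ (lam < 2 → κ < ⊤) := by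
  have hreg : ∀ᶠ T in 𝓝[<] (0:ℝ), HasDerivAt Ω (Ω' T) T ∧ HasDerivAt Ω' (Ω'' T) T ∧
      0 < Ω T ∧ 0 < Ω' T :=
    mem_of_superset (Ioo_mem_nhdsLT (neg_lt_zero.2 hc)) fun T hT =>
      have hT : T ∈ Ico (-c) 0 := Ioo_subset_Ico_self hT
      ⟨hderiv T hT, hderiv' T hT, hpos T hT, hpos' T hT⟩
  have hM_pos : ∀ᶠ T in 𝓝[<] (0:ℝ), (0 : EReal) < ((Ω' T / Ω T ^ 2 : ℝ) : EReal) :=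
    hreg.mono fun T ⟨_, _, h, h'⟩ => EReal.coe_pos.2 (by positivity)
  rcases hlam2.lt_or_gt with hlt | hgt
  · obtain ⟨κ, hκ, hκ_le⟩ := exists_tendsto_nhdsLT_div_sq_of_lt_two <|
      (hreg.and (hlam.eventually_lt_const hlt)).mono fun T ⟨⟨h, h', hΩ, hΩ'⟩, hL⟩ =>
        ⟨h, h', hΩ, (div_lt_iff₀ (by positivity)).1 (EReal.coe_lt_coe_iff.1 hL)⟩
    obtain ⟨T, hT⟩ := hκ_le.exists
    exact ⟨κ, hκ, ge_of_tendsto hκ (hM_pos.mono fun _ => le_of_lt),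
      fun h => (lt_asymm h hlt).elim, fun _ => hT.trans_lt (EReal.coe_lt_top _)⟩
  · obtain ⟨κ, hκ, hle_κ⟩ := exists_tendsto_nhdsLT_div_sq_of_two_lt <|
      (hreg.and (hlam.eventually_const_lt hgt)).mono fun T ⟨⟨h, h', hΩ, hΩ'⟩, hL⟩ =>
        ⟨h, h', hΩ, (lt_div_iff₀ (by positivity)).1 (EReal.coe_lt_coe_iff.1 hL)⟩
    obtain ⟨T, hT_pos, hT⟩ := (hM_pos.and hle_κ).exists
    exact ⟨κ, hκ, ge_of_tendsto hκ (hM_pos.mono fun _ => le_of_lt),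
      fun _ => hT_pos.trans_le hT, fun h => (lt_asymm h hgt).elim⟩

/-- Lemma B.6: under the diverging-Ω hypotheses with λ ∉ {1,2}, the ratio
M = Ω'/Ω² has a limit κ ∈ [0,∞] as T → 0⁻, with 0 < κ ≤ ∞ if λ > 2 and
0 ≤ κ < ∞ if λ < 2. -/
theorem M_limit_exists_of_diverging
    (c : ℝ) (hc : 0 < c) (Ω Ω' Ω'' : ℝ → ℝ)
    (hderiv : ∀ T ∈ Set.Ico (-c) (0:ℝ), HasDerivAt Ω (Ω' T) T)
    (hderiv' : ∀ T ∈ Set.Ico (-c) (0:ℝ), HasDerivAt Ω' (Ω'' T) T)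
    (hcont : ContinuousOn Ω'' (Set.Ico (-c) 0))
    (hmono : StrictMonoOn Ω (Set.Ico (-c) 0))
    (hpos : ∀ T ∈ Set.Ico (-c) (0:ℝ), 0 < Ω T)
    (hpos' : ∀ T ∈ Set.Ico (-c) (0:ℝ), 0 < Ω' T)
    (hdiv : Tendsto Ω (𝓝[<] (0:ℝ)) atTop)
    (lam : EReal)
    (hlam : Tendsto (fun T => ((Ω'' T * Ω T / (Ω' T) ^ 2 : ℝ) : EReal))
      (𝓝[<] (0:ℝ)) (𝓝 lam))
    (hlam1 : lam ≠ 1) (hlam2 : lam ≠ 2) :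
    ∃ κ : EReal,
      Tendsto (fun T => ((Ω' T / (Ω T) ^ 2 : ℝ) : EReal)) (𝓝[<] (0:ℝ)) (𝓝 κ) ∧
      0 ≤ κ ∧ (2 < lam → 0 < κ) ∧ (lam < 2 → κ < ⊤) :=
  M_limit_exists_of_diverging_general c hc Ω Ω' Ω'' hderiv hderiv' hpos hpos' lam hlam hlam2
end

section
/- Let Ω be continuous on [-c,0], positive, strictly monotonically decreasing and C² on [-c,0) with Ω' < 0, and Ω(0) = 0. Suppose λ = lim_{T→0⁻} Ω''Ω/(Ω')² exists with λ ≠ 1. Then M(T) = Ω'(T)/Ω(T)² tends to -∞ as T → 0⁻. -/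
open Filter Topology Set

/-! The logarithmic derivative `r = Ω'/Ω` satisfies `r' = r² (Ω''Ω/Ω'² - 1)`, so near `0` it is
monotone, in the direction given by the sign of `λ - 1`. Since `log Ω → -∞` and `r = (log Ω)'`,
`r` cannot be bounded below near `0`: for increasing `r` (`λ > 1`) this is a contradiction, and
for decreasing `r` (`λ < 1`) it forces `r → -∞`. Finally `M = r · Ω⁻¹` with `Ω⁻¹ → +∞`. -/

theorem monotoneOn_Ioo_of_hasDerivAt_nonneg {f f' : ℝ → ℝ} {a b : ℝ}
    (hf : ∀ x ∈ Ioo a b, HasDerivAt f (f' x) x) (hf' : ∀ x ∈ Ioo a b, 0 ≤ f' x) :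
    MonotoneOn f (Ioo a b) :=
  monotoneOn_of_hasDerivWithinAt_nonneg (convex_Ioo a b)
    (fun x hx => (hf x hx).continuousAt.continuousWithinAt)
    (by simpa only [interior_Ioo] using fun x hx => (hf x hx).hasDerivWithinAt)
    (by simpa only [interior_Ioo] using hf')

theorem antitoneOn_Ioo_of_hasDerivAt_nonpos {f f' : ℝ → ℝ} {a b : ℝ}
    (hf : ∀ x ∈ Ioo a b, HasDerivAt f (f' x) x) (hf' : ∀ x ∈ Ioo a b, f' x ≤ 0) :
    AntitoneOn f (Ioo a b) :=
  antitoneOn_of_hasDerivWithinAt_nonpos (convex_Ioo a b)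
    (fun x hx => (hf x hx).continuousAt.continuousWithinAt)
    (by simpa only [interior_Ioo] using fun x hx => (hf x hx).hasDerivWithinAt)
    (by simpa only [interior_Ioo] using hf')

theorem MonotoneOn.exists_eventually_ge_nhdsLT {f : ℝ → ℝ} {a b : ℝ} (hab : a < b)
    (hf : MonotoneOn f (Ioo a b)) : ∃ C, ∀ᶠ x in 𝓝[<] b, C ≤ f x := by
  obtain ⟨x₀, hx₀⟩ := nonempty_Ioo.2 hab
  refine ⟨f x₀, ?_⟩
  filter_upwards [Ioo_mem_nhdsLT hx₀.2] with x hx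
  exact hf hx₀ ⟨hx₀.1.trans hx.1, hx.2⟩ hx.1.le

theorem AntitoneOn.tendsto_nhdsLT_atBot {f : ℝ → ℝ} {a b : ℝ} (hab : a < b)
    (hf : AntitoneOn f (Ioo a b)) (hfreq : ∀ C, ∃ᶠ x in 𝓝[<] b, f x < C) :
    Tendsto f (𝓝[<] b) atBot := by
  refine tendsto_atBot.2 fun C => ?_
  obtain ⟨x₀, hx₀C, hx₀⟩ := ((hfreq C).and_eventually (Ioo_mem_nhdsLT hab)).exists
  filter_upwards [Ioo_mem_nhdsLT hx₀.2] with x hx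
  exact (hf hx₀ ⟨hx₀.1.trans hx.1, hx.2⟩ hx.1.le).trans hx₀C.le

theorem frequently_deriv_lt_of_tendsto_atBot {g g' : ℝ → ℝ} {b : ℝ}
    (hderiv : ∀ᶠ x in 𝓝[<] b, HasDerivAt g (g' x) x) (hg : Tendsto g (𝓝[<] b) atBot) (C : ℝ) :
    ∃ᶠ x in 𝓝[<] b, g' x < C := by
  intro hge
  obtain ⟨a, hab, hsub⟩ := mem_nhdsLT_iff_exists_Ioo_subset.1 (hderiv.and hge)
  have hmono : MonotoneOn (fun x => g x - C * x) (Ioo a b) :=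
    monotoneOn_Ioo_of_hasDerivAt_nonneg
      (fun x hx => ((hsub hx).1.sub ((hasDerivAt_id x).const_mul C)).congr_deriv (by ring))
      (fun x hx => sub_nonneg.2 (not_lt.1 (hsub hx).2))
  obtain ⟨B, hB⟩ := hmono.exists_eventually_ge_nhdsLT hab
  have hlin : Tendsto (fun x => -(C * x)) (𝓝[<] b) (𝓝 (-(C * b))) :=
    ((continuous_const.mul continuous_id).neg.tendsto b).mono_left nhdsWithin_le_nhds
  have hlim : Tendsto (fun x => g x - C * x) (𝓝[<] b) atBot := by
    simpa only [sub_eq_add_neg] using hg.atBot_add hlin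
  obtain ⟨x, hxB, hBx⟩ := ((hlim.eventually (eventually_lt_atBot B)).and hB).exists
  exact absurd hBx hxB.not_ge

theorem tendsto_deriv_atBot_of_tendsto_atBot {g g' g'' : ℝ → ℝ} {b : ℝ}
    (hg' : ∀ᶠ x in 𝓝[<] b, HasDerivAt g (g' x) x) (hg'' : ∀ᶠ x in 𝓝[<] b, HasDerivAt g' (g'' x) x)
    (hsign : (∀ᶠ x in 𝓝[<] b, g'' x ≤ 0) ∨ ∀ᶠ x in 𝓝[<] b, 0 ≤ g'' x)
    (hg : Tendsto g (𝓝[<] b) atBot) : Tendsto g' (𝓝[<] b) atBot := by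
  have hfreq := frequently_deriv_lt_of_tendsto_atBot hg' hg
  rcases hsign with hnonpos | hnonneg
  · obtain ⟨a, hab, hsub⟩ := mem_nhdsLT_iff_exists_Ioo_subset.1 (hg''.and hnonpos)
    exact (antitoneOn_Ioo_of_hasDerivAt_nonpos (fun x hx => (hsub hx).1)
      fun x hx => (hsub hx).2).tendsto_nhdsLT_atBot hab hfreq
  · obtain ⟨a, hab, hsub⟩ := mem_nhdsLT_iff_exists_Ioo_subset.1 (hg''.and hnonneg)
    obtain ⟨B, hB⟩ := (monotoneOn_Ioo_of_hasDerivAt_nonneg (fun x hx => (hsub hx).1)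
      fun x hx => (hsub hx).2).exists_eventually_ge_nhdsLT hab
    obtain ⟨x, hxB, hBx⟩ := ((hfreq B).and_eventually hB).exists
    exact absurd hBx hxB.not_ge

theorem HasDerivAt.hasDerivAt_logDeriv {f f' f'' : ℝ → ℝ} {x : ℝ} (hf : HasDerivAt f (f' x) x)
    (hf' : HasDerivAt f' (f'' x) x) (hfx : f x ≠ 0) (hf'x : f' x ≠ 0) :
    HasDerivAt (fun y => f' y / f y) ((f' x / f x) ^ 2 * (f'' x * f x / f' x ^ 2 - 1)) x :=
  (hf'.div hf hfx).congr_deriv (by field_simp)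

theorem M_tendsto_atBot_of_vanishing_general
    (c : ℝ) (hc : 0 < c) (Ω Ω' Ω'' : ℝ → ℝ)
    (hcontΩ : ContinuousOn Ω (Set.Icc (-c) 0))
    (hderiv : ∀ T ∈ Set.Ico (-c) (0:ℝ), HasDerivAt Ω (Ω' T) T)
    (hderiv' : ∀ T ∈ Set.Ico (-c) (0:ℝ), HasDerivAt Ω' (Ω'' T) T)
    (hpos : ∀ T ∈ Set.Ico (-c) (0:ℝ), 0 < Ω T)
    (hneg' : ∀ T ∈ Set.Ico (-c) (0:ℝ), Ω' T < 0)
    (hzero : Ω 0 = 0)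
    (lam : EReal)
    (hlam : Tendsto (fun T => ((Ω'' T * Ω T / (Ω' T) ^ 2 : ℝ) : EReal))
      (𝓝[<] (0:ℝ)) (𝓝 lam))
    (hlam1 : lam ≠ 1) :
    Tendsto (fun T => Ω' T / (Ω T) ^ 2) (𝓝[<] (0:ℝ)) atBot := by
  have hnear : ∀ᶠ T in 𝓝[<] (0:ℝ), T ∈ Ico (-c) 0 := Ico_mem_nhdsLT (neg_lt_zero.2 hc)
  have hΩ : Tendsto Ω (𝓝[<] 0) (𝓝[>] 0) := by
    refine tendsto_nhdsWithin_iff.2 ⟨?_, hnear.mono hpos⟩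
    have := (hcontΩ 0 ⟨(neg_lt_zero.2 hc).le, le_rfl⟩).tendsto.mono_left
      (nhdsWithin_mono 0 Ico_subset_Icc_self)
    rwa [hzero, nhdsWithin_Ico_eq_nhdsLT (neg_lt_zero.2 hc)] at this
  have hsign : (∀ᶠ T in 𝓝[<] (0:ℝ), Ω'' T * Ω T / Ω' T ^ 2 - 1 ≤ 0) ∨
      ∀ᶠ T in 𝓝[<] (0:ℝ), 0 ≤ Ω'' T * Ω T / Ω' T ^ 2 - 1 := by
    rcases hlam1.lt_or_gt with hlt | hgt
    · exact .inl <| (hlam.eventually (Iio_mem_nhds hlt)).mono fun T hT =>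
        sub_nonpos.2 (EReal.coe_lt_coe_iff.1 hT).le
    · exact .inr <| (hlam.eventually (Ioi_mem_nhds hgt)).mono fun T hT =>
        sub_nonneg.2 (EReal.coe_lt_coe_iff.1 hT).le
  have hlogDeriv : Tendsto (fun T => Ω' T / Ω T) (𝓝[<] 0) atBot :=
    tendsto_deriv_atBot_of_tendsto_atBot
      (hnear.mono fun T hT => (hderiv T hT).log (hpos T hT).ne')
      (hnear.mono fun T hT =>
        (hderiv T hT).hasDerivAt_logDeriv (hderiv' T hT) (hpos T hT).ne' (hneg' T hT).ne)
      (hsign.imp (fun h => h.mono fun T hT => mul_nonpos_of_nonneg_of_nonpos (sq_nonneg _) hT)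
        fun h => h.mono fun T hT => mul_nonneg (sq_nonneg _) hT)
      (Real.tendsto_log_nhdsGT_zero.comp hΩ)
  refine (hlogDeriv.atBot_mul_atTop₀ (tendsto_inv_nhdsGT_zero.comp hΩ)).congr fun T => ?_
  simp only [Function.comp_apply, div_eq_mul_inv, pow_two, mul_inv, mul_assoc]

/-- Lemma B.8: under the vanishing-Ω hypotheses with λ ≠ 1,
M = Ω'/Ω² → -∞ as T → 0⁻. -/
theorem M_tendsto_atBot_of_vanishing
    (c : ℝ) (hc : 0 < c) (Ω Ω' Ω'' : ℝ → ℝ)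
    (hcontΩ : ContinuousOn Ω (Set.Icc (-c) 0))
    (hderiv : ∀ T ∈ Set.Ico (-c) (0:ℝ), HasDerivAt Ω (Ω' T) T)
    (hderiv' : ∀ T ∈ Set.Ico (-c) (0:ℝ), HasDerivAt Ω' (Ω'' T) T)
    (hcont : ContinuousOn Ω'' (Set.Ico (-c) 0))
    (hanti : StrictAntiOn Ω (Set.Ico (-c) 0))
    (hpos : ∀ T ∈ Set.Ico (-c) (0:ℝ), 0 < Ω T)
    (hneg' : ∀ T ∈ Set.Ico (-c) (0:ℝ), Ω' T < 0)
    (hzero : Ω 0 = 0)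
    (lam : EReal)
    (hlam : Tendsto (fun T => ((Ω'' T * Ω T / (Ω' T) ^ 2 : ℝ) : EReal))
      (𝓝[<] (0:ℝ)) (𝓝 lam))
    (hlam1 : lam ≠ 1) :
    Tendsto (fun T => Ω' T / (Ω T) ^ 2) (𝓝[<] (0:ℝ)) atBot :=
  M_tendsto_atBot_of_vanishing_general c hc Ω Ω' Ω'' hcontΩ hderiv hderiv' hpos hneg' hzero lam hlam
    hlam1
end

section
/- Let Ω be positive, strictly monotonically increasing, and C² on [-c,0) with Ω' > 0 and Ω → +∞ as T → 0⁻, and suppose λ = lim_{T→0⁻} Ω''Ω/(Ω')² exists with λ ∉ {1, 2}. Then N(T) = L(T)²·M(T)⁴, where L = Ω''Ω/(Ω')² and M = Ω'/Ω², has a limit ϱ as T → 0⁻ in the extended nonnegative reals, with 0 < ϱ ≤ +∞ if λ > 2 and 0 ≤ ϱ < +∞ if λ < 2. -/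
/-!
Since `(Ω'/Ω²)' = (Ω'²/Ω³)(L - 2)`, the function `M` is eventually antitone when `λ < 2` and
eventually monotone when `λ > 2`; being positive, it has a limit `μ`, finite in the first case
and positive (possibly `+∞`) in the second. Moreover `λ ≥ 0`: if `L < 0` near `0` then `Ω` is
concave there, so it stays below a tangent line and cannot diverge. Hence `λ` is finite when
`λ < 2`, and in either case `N = L²M⁴ → λ²μ⁴` without an indeterminate form `0 · ∞`.
-/

open Filter Topology Set

namespace EReal

variable {α : Type*} {l : Filter α} {f g : α → EReal} {a b : EReal}

protected theorem pow_pos (ha : 0 < a) : ∀ n : ℕ, 0 < a ^ n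
  | 0 => by simp
  | n + 1 => by rw [pow_succ]; exact EReal.mul_pos (EReal.pow_pos ha n) ha

theorem Tendsto.mul_of_pos (hf : Tendsto f l (𝓝 a)) (hg : Tendsto g l (𝓝 b)) (ha : 0 < a)
    (hb : 0 < b) : Tendsto (fun x => f x * g x) l (𝓝 (a * b)) :=
  EReal.Tendsto.mul hf hg (.inl ha.ne') (.inl ha.ne') (.inr hb.ne') (.inr hb.ne')

theorem Tendsto.pow_of_pos (hf : Tendsto f l (𝓝 a)) (ha : 0 < a) :
    ∀ n : ℕ, Tendsto (fun x => f x ^ n) l (𝓝 (a ^ n))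
  | 0 => by simpa using tendsto_const_nhds
  | n + 1 => by
    simp_rw [pow_succ]
    exact EReal.Tendsto.mul_of_pos (EReal.Tendsto.pow_of_pos hf ha n) hf (EReal.pow_pos ha n) ha

end EReal

section Monotonicity

variable {f f' f'' : ℝ → ℝ} {a b : ℝ}

theorem monotoneOn_Ico_of_hasDerivAt_nonneg (hf : ∀ x ∈ Ico b a, HasDerivAt f (f' x) x)
    (hf' : ∀ x ∈ Ico b a, 0 ≤ f' x) : MonotoneOn f (Ico b a) :=
  monotoneOn_of_hasDerivWithinAt_nonneg (convex_Ico b a)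
    (fun x hx => (hf x hx).continuousAt.continuousWithinAt)
    (fun x hx => (hf x (interior_subset hx)).hasDerivWithinAt)
    fun x hx => hf' x (interior_subset hx)

theorem antitoneOn_Ico_of_hasDerivAt_nonpos (hf : ∀ x ∈ Ico b a, HasDerivAt f (f' x) x)
    (hf' : ∀ x ∈ Ico b a, f' x ≤ 0) : AntitoneOn f (Ico b a) :=
  antitoneOn_of_hasDerivWithinAt_nonpos (convex_Ico b a)
    (fun x hx => (hf x hx).continuousAt.continuousWithinAt)
    (fun x hx => (hf x (interior_subset hx)).hasDerivWithinAt)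
    fun x hx => hf' x (interior_subset hx)

theorem not_tendsto_atTop_of_eventually_deriv_deriv_nonpos
    (hf : ∀ᶠ x in 𝓝[<] a, HasDerivAt f (f' x) x) (hf' : ∀ᶠ x in 𝓝[<] a, HasDerivAt f' (f'' x) x)
    (hf'' : ∀ᶠ x in 𝓝[<] a, f'' x ≤ 0) : ¬Tendsto f (𝓝[<] a) atTop := by
  obtain ⟨b, hba : b < a, hb⟩ := mem_nhdsLT_iff_exists_Ico_subset.1 (hf.and (hf'.and hf''))
  have hb_mem : b ∈ Ico b a := ⟨le_rfl, hba⟩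
  have hf'_anti : AntitoneOn f' (Ico b a) :=
    antitoneOn_Ico_of_hasDerivAt_nonpos (fun x hx => (hb hx).2.1) fun x hx => (hb hx).2.2
  have hg_anti : AntitoneOn (fun x => f x - f' b * x) (Ico b a) := by
    refine antitoneOn_Ico_of_hasDerivAt_nonpos (f' := fun x => f' x - f' b) (fun x hx => ?_)
      fun x hx => sub_nonpos.2 (hf'_anti hb_mem hx hx.1)
    simpa using (hb hx).1.fun_sub ((hasDerivAt_id' x).const_mul (f' b))
  intro htop
  obtain ⟨x, hfx, hx⟩ :=
    ((htop.eventually_gt_atTop (f b + |f' b| * (a - b))).and (Ico_mem_nhdsLT hba)).exists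
  have htangent : f x - f' b * x ≤ f b - f' b * b := hg_anti hb_mem hx hx.1
  have hslope : f' b * (x - b) ≤ |f' b| * (a - b) := calc
    f' b * (x - b) ≤ |f' b| * (x - b) :=
      mul_le_mul_of_nonneg_right (le_abs_self _) (sub_nonneg.2 hx.1)
    _ ≤ |f' b| * (a - b) := mul_le_mul_of_nonneg_left (by linarith [hx.2]) (abs_nonneg _)
  linarith

theorem exists_tendsto_ereal_of_eventually_deriv_nonneg
    (hf : ∀ᶠ x in 𝓝[<] a, HasDerivAt f (f' x) x) (hf' : ∀ᶠ x in 𝓝[<] a, 0 ≤ f' x) :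
    ∃ μ : EReal, Tendsto (fun x => (f x : EReal)) (𝓝[<] a) (𝓝 μ) ∧
      ∀ᶠ x in 𝓝[<] a, (f x : EReal) ≤ μ := by
  obtain ⟨b, hba : b < a, hb⟩ := mem_nhdsLT_iff_exists_Ico_subset.1 (hf.and hf')
  have hmono : MonotoneOn (fun x => (f x : EReal)) (Ioo b a) :=
    EReal.coe_strictMono.monotone.comp_monotoneOn <|
      (monotoneOn_Ico_of_hasDerivAt_nonneg (fun x hx => (hb hx).1) fun x hx => (hb hx).2).mono
        Ioo_subset_Ico_self
  refine ⟨_, hmono.tendsto_nhdsWithin_Ioo_left (nonempty_Ioo.2 hba) (OrderTop.bddAbove _), ?_⟩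
  filter_upwards [Ioo_mem_nhdsLT hba] with x hx using le_sSup (mem_image_of_mem _ hx)

theorem exists_tendsto_of_eventually_deriv_nonpos {C : ℝ}
    (hf : ∀ᶠ x in 𝓝[<] a, HasDerivAt f (f' x) x) (hf' : ∀ᶠ x in 𝓝[<] a, f' x ≤ 0)
    (hC : ∀ᶠ x in 𝓝[<] a, C ≤ f x) : ∃ μ : ℝ, Tendsto f (𝓝[<] a) (𝓝 μ) := by
  obtain ⟨b, hba : b < a, hb⟩ := mem_nhdsLT_iff_exists_Ico_subset.1 (hf.and (hf'.and hC))
  have hanti : AntitoneOn f (Ioo b a) :=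
    (antitoneOn_Ico_of_hasDerivAt_nonpos (fun x hx => (hb hx).1) fun x hx => (hb hx).2.1).mono
      Ioo_subset_Ico_self
  refine ⟨_, hanti.tendsto_nhdsWithin_Ioo_left (nonempty_Ioo.2 hba) ⟨C, ?_⟩⟩
  rintro _ ⟨x, hx, rfl⟩
  exact (hb (Ioo_subset_Ico_self hx)).2.2

end Monotonicity

theorem HasDerivAt.div_sq {g h : ℝ → ℝ} {g' h' x : ℝ} (hg : HasDerivAt g g' x)
    (hh : HasDerivAt h h' x) (hx : h x ≠ 0) :
    HasDerivAt (fun y => g y / h y ^ 2) ((g' * h x - 2 * g x * h') / h x ^ 3) x := by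
  refine (hg.fun_div (hh.fun_pow 2) (pow_ne_zero 2 hx)).congr_deriv ?_
  field_simp
  ring

section DerivDivSq

variable {f f' f'' : ℝ → ℝ} {a : ℝ}

theorem eventually_hasDerivAt_deriv_div_sq (hf : ∀ᶠ x in 𝓝[<] a, HasDerivAt f (f' x) x)
    (hf' : ∀ᶠ x in 𝓝[<] a, HasDerivAt f' (f'' x) x) (hpos : ∀ᶠ x in 𝓝[<] a, 0 < f x) :
    ∀ᶠ x in 𝓝[<] a, HasDerivAt (fun y => f' y / f y ^ 2)
      ((f'' x * f x - 2 * f' x * f' x) / f x ^ 3) x := by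
  filter_upwards [hf, hf', hpos] with x h h' hx using h'.div_sq h hx.ne'

theorem exists_tendsto_deriv_div_sq_of_le_two (hf : ∀ᶠ x in 𝓝[<] a, HasDerivAt f (f' x) x)
    (hf' : ∀ᶠ x in 𝓝[<] a, HasDerivAt f' (f'' x) x) (hpos : ∀ᶠ x in 𝓝[<] a, 0 < f x)
    (hpos' : ∀ᶠ x in 𝓝[<] a, 0 < f' x) (hL : ∀ᶠ x in 𝓝[<] a, f'' x * f x / f' x ^ 2 ≤ 2) :
    ∃ μ : ℝ, Tendsto (fun x => f' x / f x ^ 2) (𝓝[<] a) (𝓝 μ) := by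
  refine exists_tendsto_of_eventually_deriv_nonpos (C := 0)
    (eventually_hasDerivAt_deriv_div_sq hf hf' hpos) ?_ ?_
  · filter_upwards [hpos, hpos', hL] with x hx hx' hLx
    rw [div_le_iff₀ (by positivity)] at hLx
    exact div_nonpos_of_nonpos_of_nonneg (by linarith) (by positivity)
  · filter_upwards [hpos, hpos'] with x hx hx' using by positivity

theorem exists_tendsto_ereal_deriv_div_sq_of_two_le
    (hf : ∀ᶠ x in 𝓝[<] a, HasDerivAt f (f' x) x) (hf' : ∀ᶠ x in 𝓝[<] a, HasDerivAt f' (f'' x) x)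
    (hpos : ∀ᶠ x in 𝓝[<] a, 0 < f x) (hpos' : ∀ᶠ x in 𝓝[<] a, 0 < f' x)
    (hL : ∀ᶠ x in 𝓝[<] a, 2 ≤ f'' x * f x / f' x ^ 2) :
    ∃ μ : EReal, Tendsto (fun x => ((f' x / f x ^ 2 : ℝ) : EReal)) (𝓝[<] a) (𝓝 μ) ∧ 0 < μ := by
  obtain ⟨μ, hμ, hle⟩ := exists_tendsto_ereal_of_eventually_deriv_nonneg
    (eventually_hasDerivAt_deriv_div_sq hf hf' hpos) <| by
      filter_upwards [hpos, hpos', hL] with x hx hx' hLx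
      rw [le_div_iff₀ (by positivity)] at hLx
      exact div_nonneg (by linarith) (by positivity)
  obtain ⟨x, hxμ, hx, hx'⟩ := (hle.and (hpos.and hpos')).exists
  exact ⟨μ, hμ, (EReal.coe_pos.2 (by positivity)).trans_le hxμ⟩

theorem nonneg_of_tendsto_mul_div_sq (hf : ∀ᶠ x in 𝓝[<] a, HasDerivAt f (f' x) x)
    (hf' : ∀ᶠ x in 𝓝[<] a, HasDerivAt f' (f'' x) x) (hpos : ∀ᶠ x in 𝓝[<] a, 0 < f x)
    (hdiv : Tendsto f (𝓝[<] a) atTop) {lam : EReal}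
    (hlam : Tendsto (fun x => ((f'' x * f x / f' x ^ 2 : ℝ) : EReal)) (𝓝[<] a) (𝓝 lam)) :
    0 ≤ lam := by
  by_contra! hneg
  refine not_tendsto_atTop_of_eventually_deriv_deriv_nonpos hf hf' ?_ hdiv
  filter_upwards [hlam.eventually_lt_const hneg, hpos] with x hLx hx
  by_contra! hx''
  exact (EReal.coe_nonneg.2 (by positivity)).not_gt hLx

end DerivDivSq

theorem N_limit_exists_of_diverging_general
    (c : ℝ) (hc : 0 < c) (Ω Ω' Ω'' : ℝ → ℝ)
    (hderiv : ∀ T ∈ Set.Ico (-c) (0:ℝ), HasDerivAt Ω (Ω' T) T)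
    (hderiv' : ∀ T ∈ Set.Ico (-c) (0:ℝ), HasDerivAt Ω' (Ω'' T) T)
    (hpos : ∀ T ∈ Set.Ico (-c) (0:ℝ), 0 < Ω T)
    (hpos' : ∀ T ∈ Set.Ico (-c) (0:ℝ), 0 < Ω' T)
    (hdiv : Tendsto Ω (𝓝[<] (0:ℝ)) atTop)
    (lam : EReal)
    (hlam : Tendsto (fun T => ((Ω'' T * Ω T / (Ω' T) ^ 2 : ℝ) : EReal))
      (𝓝[<] (0:ℝ)) (𝓝 lam))
    (hlam2 : lam ≠ 2) :
    ∃ ϱ : EReal,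
      Tendsto
        (fun T => (((Ω'' T * Ω T / (Ω' T) ^ 2) ^ 2 * (Ω' T / (Ω T) ^ 2) ^ 4 : ℝ) : EReal))
        (𝓝[<] (0:ℝ)) (𝓝 ϱ) ∧
      0 ≤ ϱ ∧ (2 < lam → 0 < ϱ) ∧ (lam < 2 → ϱ < ⊤) := by
  have hnear : ∀ᶠ T in 𝓝[<] (0:ℝ), T ∈ Ico (-c) 0 := Ico_mem_nhdsLT (neg_lt_zero.2 hc)
  have hΩ := hnear.mono hderiv
  have hΩ' := hnear.mono hderiv'
  have hΩpos := hnear.mono hpos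
  have hΩpos' := hnear.mono hpos'
  have hlam0 : 0 ≤ lam := nonneg_of_tendsto_mul_div_sq hΩ hΩ' hΩpos hdiv hlam
  rcases hlam2.lt_or_gt with hlt | hgt
  · lift lam to ℝ using
      ⟨(hlt.trans (EReal.coe_lt_top 2)).ne, (EReal.bot_lt_zero.trans_le hlam0).ne'⟩ with l
    obtain ⟨μ, hμ⟩ := exists_tendsto_deriv_div_sq_of_le_two hΩ hΩ' hΩpos hΩpos' <|
      (hlam.eventually_lt_const hlt).mono fun _ hT => (EReal.coe_lt_coe_iff.1 hT).le
    refine ⟨(l ^ 2 * μ ^ 4 : ℝ),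
      EReal.tendsto_coe.2 (((EReal.tendsto_coe.1 hlam).pow 2).mul (hμ.pow 4)),
      EReal.coe_nonneg.2 (by positivity), fun h => (h.asymm hlt).elim, fun _ => EReal.coe_lt_top _⟩
  · obtain ⟨μ, hμ, hμ0⟩ := exists_tendsto_ereal_deriv_div_sq_of_two_le hΩ hΩ' hΩpos hΩpos' <|
      (hlam.eventually_const_lt hgt).mono fun _ hT => (EReal.coe_lt_coe_iff.1 hT).le
    have hlam_pos : 0 < lam := zero_lt_two.trans hgt
    have hϱ : 0 < lam ^ 2 * μ ^ 4 :=
      EReal.mul_pos (EReal.pow_pos hlam_pos 2) (EReal.pow_pos hμ0 4)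
    refine ⟨lam ^ 2 * μ ^ 4, ?_, hϱ.le, fun _ => hϱ, fun h => (h.asymm hgt).elim⟩
    simp only [EReal.coe_mul, EReal.coe_pow]
    exact EReal.Tendsto.mul_of_pos (EReal.Tendsto.pow_of_pos hlam hlam_pos 2)
      (EReal.Tendsto.pow_of_pos hμ hμ0 4) (EReal.pow_pos hlam_pos 2) (EReal.pow_pos hμ0 4)

/-- Lemma B.9: under the diverging-Ω hypotheses with λ ∉ {1,2}, the function
N = L²·M⁴ (with L = Ω''Ω/(Ω')² and M = Ω'/Ω²) has a limit ϱ ∈ [0,∞] as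
T → 0⁻, with 0 < ϱ ≤ ∞ if λ > 2 and 0 ≤ ϱ < ∞ if λ < 2. -/
theorem N_limit_exists_of_diverging
    (c : ℝ) (hc : 0 < c) (Ω Ω' Ω'' : ℝ → ℝ)
    (hderiv : ∀ T ∈ Set.Ico (-c) (0:ℝ), HasDerivAt Ω (Ω' T) T)
    (hderiv' : ∀ T ∈ Set.Ico (-c) (0:ℝ), HasDerivAt Ω' (Ω'' T) T)
    (hcont : ContinuousOn Ω'' (Set.Ico (-c) 0))
    (hmono : StrictMonoOn Ω (Set.Ico (-c) 0))
    (hpos : ∀ T ∈ Set.Ico (-c) (0:ℝ), 0 < Ω T)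
    (hpos' : ∀ T ∈ Set.Ico (-c) (0:ℝ), 0 < Ω' T)
    (hdiv : Tendsto Ω (𝓝[<] (0:ℝ)) atTop)
    (lam : EReal)
    (hlam : Tendsto (fun T => ((Ω'' T * Ω T / (Ω' T) ^ 2 : ℝ) : EReal))
      (𝓝[<] (0:ℝ)) (𝓝 lam))
    (hlam1 : lam ≠ 1) (hlam2 : lam ≠ 2) :
    ∃ ϱ : EReal,
      Tendsto
        (fun T => (((Ω'' T * Ω T / (Ω' T) ^ 2) ^ 2 * (Ω' T / (Ω T) ^ 2) ^ 4 : ℝ) : EReal))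
        (𝓝[<] (0:ℝ)) (𝓝 ϱ) ∧
      0 ≤ ϱ ∧ (2 < lam → 0 < ϱ) ∧ (lam < 2 → ϱ < ⊤) :=
  N_limit_exists_of_diverging_general c hc Ω Ω' Ω'' hderiv hderiv' hpos hpos' hdiv lam hlam hlam2
end

section
/- Let Ω be continuous on [-c,0], positive, strictly monotonically decreasing and C² on [-c,0) with Ω' < 0, Ω(0) = 0, and suppose λ = lim_{T→0⁻} Ω''Ω/(Ω')² exists with λ ∉ {0, 1}. Then N(T) = L(T)²·M(T)⁴ → +∞ as T → 0⁻, where L = Ω''Ω/(Ω')² and M = Ω'/Ω². -/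
/-!
Write `L = Ω'' Ω / Ω'²`; the whole argument rests on `(Ω / Ω')' = 1 - L`.
If `λ > 1`, then `Ω / Ω'` is eventually decreasing and negative, hence bounded above by a
negative constant; this gives `Ω' ≥ -K Ω`, and by Grönwall `Ω` stays away from `0`, which is
impossible. So `λ < 1`, `Ω / Ω'` is eventually increasing and negative, hence bounded, and
`Ω² / Ω' = Ω · (Ω / Ω')` tends to `0` from below; thus `M⁴ → ∞`, while `L²` stays above a
positive constant because `λ ≠ 0`.
-/

open Filter Topology Set

section

variable {f f' : ℝ → ℝ} {b : ℝ}

theorem exists_eventually_le_nhdsLT_of_hasDerivAt_nonneg {P : ℝ → Prop}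
    (hf : ∀ᶠ x in 𝓝[<] b, HasDerivAt f (f' x) x ∧ 0 ≤ f' x) (hP : ∀ᶠ x in 𝓝[<] b, P x) :
    ∃ t, P t ∧ ∀ᶠ x in 𝓝[<] b, f t ≤ f x := by
  obtain ⟨a, ha, hsub⟩ := mem_nhdsLT_iff_exists_Ioo_subset.mp (hf.and hP)
  have hmono : MonotoneOn f (Ioo a b) :=
    monotoneOn_of_hasDerivWithinAt_nonneg (convex_Ioo a b)
      (fun x hx => (hsub hx).1.1.continuousAt.continuousWithinAt)
      (fun x hx => (hsub (interior_subset hx)).1.1.hasDerivWithinAt)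
      (fun x hx => (hsub (interior_subset hx)).1.2)
  obtain ⟨t, hat, htb⟩ := exists_between (mem_Iio.mp ha)
  refine ⟨t, (hsub ⟨hat, htb⟩).2, ?_⟩
  filter_upwards [Ioo_mem_nhdsLT htb] with x hx
  exact hmono ⟨hat, htb⟩ ⟨hat.trans hx.1, hx.2⟩ hx.1.le

theorem exists_eventually_ge_nhdsLT_of_hasDerivAt_nonpos {P : ℝ → Prop}
    (hf : ∀ᶠ x in 𝓝[<] b, HasDerivAt f (f' x) x ∧ f' x ≤ 0) (hP : ∀ᶠ x in 𝓝[<] b, P x) :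
    ∃ t, P t ∧ ∀ᶠ x in 𝓝[<] b, f x ≤ f t := by
  have hneg : ∀ᶠ x in 𝓝[<] b, HasDerivAt (-f) (-f' x) x ∧ 0 ≤ -f' x :=
    hf.mono fun x hx => ⟨hx.1.neg, neg_nonneg.mpr hx.2⟩
  obtain ⟨t, ht, hle⟩ := exists_eventually_le_nhdsLT_of_hasDerivAt_nonneg hneg hP
  exact ⟨t, ht, hle.mono fun x hx => neg_le_neg_iff.mp hx⟩

-- Grönwall: `g · exp (K ·)` is nondecreasing.
theorem not_tendsto_nhds_zero_of_neg_mul_le_deriv {g g' : ℝ → ℝ} (K : ℝ)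
    (hg : ∀ᶠ x in 𝓝[<] b, HasDerivAt g (g' x) x ∧ 0 < g x ∧ -K * g x ≤ g' x) :
    ¬ Tendsto g (𝓝[<] b) (𝓝 0) := by
  intro hg0
  have hderiv : ∀ᶠ x in 𝓝[<] b, HasDerivAt (fun y => g y * Real.exp (K * y))
      (Real.exp (K * x) * (g' x + K * g x)) x ∧ 0 ≤ Real.exp (K * x) * (g' x + K * g x) := by
    filter_upwards [hg] with x hx
    obtain ⟨hgx, -, hK⟩ := hx
    refine ⟨?_, mul_nonneg (Real.exp_pos _).le (by linarith)⟩
    exact (hgx.mul ((hasDerivAt_id' x).const_mul K).exp).congr_deriv (by ring)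
  obtain ⟨t, hgt, hle⟩ := exists_eventually_le_nhdsLT_of_hasDerivAt_nonneg hderiv hg
  have hlim : Tendsto (fun y => g y * Real.exp (K * y)) (𝓝[<] b) (𝓝 0) := by
    simpa using hg0.mul (((continuous_const.mul continuous_id).rexp.tendsto b).mono_left
      nhdsWithin_le_nhds)
  have hpos : 0 < g t * Real.exp (K * t) := mul_pos hgt.2.1 (Real.exp_pos _)
  obtain ⟨x, hx, hxlt⟩ := (hle.and (hlim.eventually (gt_mem_nhds hpos))).exists
  exact (hx.trans_lt hxlt).false

end

section

variable {g g' g'' : ℝ → ℝ} {b : ℝ}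

theorem hasDerivAt_div_deriv_s8 {x : ℝ} (h₁ : HasDerivAt g (g' x) x)
    (h₂ : HasDerivAt g' (g'' x) x) (hne : g' x ≠ 0) :
    HasDerivAt (fun y => g y / g' y) (1 - g'' x * g x / g' x ^ 2) x :=
  (h₁.div h₂ hne).congr_deriv (by field_simp)

theorem not_eventually_one_lt_mul_div_sq
    (hg : ∀ᶠ x in 𝓝[<] b, HasDerivAt g (g' x) x ∧ HasDerivAt g' (g'' x) x ∧ 0 < g x ∧ g' x < 0)
    (hg0 : Tendsto g (𝓝[<] b) (𝓝 0)) :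
    ¬ ∀ᶠ x in 𝓝[<] b, 1 < g'' x * g x / g' x ^ 2 := by
  intro hL
  have hanti : ∀ᶠ x in 𝓝[<] b, HasDerivAt (fun y => g y / g' y) (1 - g'' x * g x / g' x ^ 2) x ∧
      1 - g'' x * g x / g' x ^ 2 ≤ 0 := by
    filter_upwards [hg, hL] with x ⟨h₁, h₂, _, hneg⟩ hLx
    exact ⟨hasDerivAt_div_deriv_s8 h₁ h₂ hneg.ne, by linarith⟩
  obtain ⟨t, ⟨-, -, hgt, hg't⟩, hle⟩ := exists_eventually_ge_nhdsLT_of_hasDerivAt_nonpos hanti hg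
  refine not_tendsto_nhds_zero_of_neg_mul_le_deriv (g' := g') (-(g' t / g t)) ?_ hg0
  filter_upwards [hg, hle] with x ⟨h₁, _, hgx, hg'x⟩ hx
  refine ⟨h₁, hgx, ?_⟩
  rw [div_le_iff_of_neg hg'x, div_mul_eq_mul_div, div_le_iff_of_neg hg't] at hx
  rw [neg_neg, div_mul_eq_mul_div, div_le_iff₀ hgt]
  linarith

theorem tendsto_sq_div_deriv_nhdsLT_zero
    (hg : ∀ᶠ x in 𝓝[<] b, HasDerivAt g (g' x) x ∧ HasDerivAt g' (g'' x) x ∧ 0 < g x ∧ g' x < 0)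
    (hg0 : Tendsto g (𝓝[<] b) (𝓝 0)) (hL : ∀ᶠ x in 𝓝[<] b, g'' x * g x / g' x ^ 2 < 1) :
    Tendsto (fun x => g x ^ 2 / g' x) (𝓝[<] b) (𝓝[<] 0) := by
  have hmono : ∀ᶠ x in 𝓝[<] b, HasDerivAt (fun y => g y / g' y) (1 - g'' x * g x / g' x ^ 2) x ∧
      0 ≤ 1 - g'' x * g x / g' x ^ 2 := by
    filter_upwards [hg, hL] with x ⟨h₁, h₂, _, hneg⟩ hLx
    exact ⟨hasDerivAt_div_deriv_s8 h₁ h₂ hneg.ne, by linarith⟩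
  obtain ⟨t, -, hle⟩ := exists_eventually_le_nhdsLT_of_hasDerivAt_nonneg hmono hg
  have hneg : ∀ᶠ x in 𝓝[<] b, g x ^ 2 / g' x < 0 := by
    filter_upwards [hg] with x ⟨_, _, hgx, hg'x⟩
    exact div_neg_of_pos_of_neg (by positivity) hg'x
  -- `g² / g' = g · (g / g')`, and `g / g'` is squeezed between `g t / g' t` and `0`.
  have hlower : Tendsto (fun x => g x * (g t / g' t)) (𝓝[<] b) (𝓝 0) := by
    simpa using hg0.mul_const (g t / g' t)
  refine tendsto_nhdsWithin_iff.mpr ⟨tendsto_of_tendsto_of_tendsto_of_le_of_le' hlower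
    tendsto_const_nhds ?_ (hneg.mono fun x hx => hx.le), hneg⟩
  filter_upwards [hg, hle] with x ⟨_, _, hgx, _⟩ hx
  calc g x * (g t / g' t) ≤ g x * (g x / g' x) := mul_le_mul_of_nonneg_left hx hgx.le
    _ = g x ^ 2 / g' x := by ring

theorem tendsto_deriv_div_sq_pow_four_atTop
    (hg : ∀ᶠ x in 𝓝[<] b, HasDerivAt g (g' x) x ∧ HasDerivAt g' (g'' x) x ∧ 0 < g x ∧ g' x < 0)
    (hg0 : Tendsto g (𝓝[<] b) (𝓝 0)) (hL : ∀ᶠ x in 𝓝[<] b, g'' x * g x / g' x ^ 2 < 1) :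
    Tendsto (fun x => (g' x / g x ^ 2) ^ 4) (𝓝[<] b) atTop := by
  have hbot : Tendsto (fun x => g' x / g x ^ 2) (𝓝[<] b) atBot := by
    simpa only [Function.comp_def, inv_div] using
      tendsto_inv_nhdsLT_zero.comp (tendsto_sq_div_deriv_nhdsLT_zero hg hg0 hL)
  simpa only [Function.comp_def, Even.neg_pow (by decide : Even 4)] using
    (tendsto_pow_atTop (by norm_num : 4 ≠ 0)).comp (tendsto_neg_atBot_atTop.comp hbot)

end

theorem exists_pos_eventually_le_sq_of_tendsto_ne_zero {α : Type*} {l : Filter α} {u : α → ℝ}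
    {lam : EReal} (hu : Tendsto (fun x => (u x : EReal)) l (𝓝 lam)) (hlam : lam ≠ 0) :
    ∃ ε > 0, ∀ᶠ x in l, ε ≤ u x ^ 2 := by
  obtain ⟨δ, hδ, hlamδ⟩ : ∃ δ : ℝ, 0 < δ ∧ lam ∉ Icc (-δ : EReal) δ := by
    rcases hlam.lt_or_gt with hneg | hpos
    · obtain ⟨x, hlx, hx0⟩ := EReal.lt_iff_exists_real_btwn.mp hneg
      refine ⟨-x, by simpa using EReal.coe_lt_coe_iff.mp hx0, fun h => ?_⟩
      exact (hlx.trans_le (by simpa using h.1)).false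
    · obtain ⟨x, hx0, hxl⟩ := EReal.lt_iff_exists_real_btwn.mp hpos
      exact ⟨x, by exact_mod_cast hx0, fun h => (h.2.trans_lt hxl).false⟩
  refine ⟨δ ^ 2, by positivity, ?_⟩
  filter_upwards [hu.eventually (isClosed_Icc.isOpen_compl.mem_nhds hlamδ)] with x hx
  have hδx : ¬ |u x| ≤ δ := by
    simp only [mem_Icc, ← EReal.coe_neg, EReal.coe_le_coe_iff] at hx
    rwa [abs_le]
  rw [sq_le_sq, abs_of_pos hδ]
  exact (not_le.mp hδx).le

theorem N_tendsto_atTop_of_vanishing_general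
    (c : ℝ) (hc : 0 < c) (Ω Ω' Ω'' : ℝ → ℝ)
    (hcontΩ : ContinuousOn Ω (Set.Icc (-c) 0))
    (hderiv : ∀ T ∈ Set.Ico (-c) (0:ℝ), HasDerivAt Ω (Ω' T) T)
    (hderiv' : ∀ T ∈ Set.Ico (-c) (0:ℝ), HasDerivAt Ω' (Ω'' T) T)
    (hpos : ∀ T ∈ Set.Ico (-c) (0:ℝ), 0 < Ω T)
    (hneg' : ∀ T ∈ Set.Ico (-c) (0:ℝ), Ω' T < 0)
    (hzero : Ω 0 = 0)
    (lam : EReal)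
    (hlam : Tendsto (fun T => ((Ω'' T * Ω T / (Ω' T) ^ 2 : ℝ) : EReal))
      (𝓝[<] (0:ℝ)) (𝓝 lam))
    (hlam0 : lam ≠ 0) (hlam1 : lam ≠ 1) :
    Tendsto (fun T => (Ω'' T * Ω T / (Ω' T) ^ 2) ^ 2 * (Ω' T / (Ω T) ^ 2) ^ 4)
      (𝓝[<] (0:ℝ)) atTop := by
  have hc0 : -c < 0 := neg_neg_of_pos hc
  have hΩ0 : Tendsto Ω (𝓝[<] 0) (𝓝 0) := by
    simpa only [hzero] using
      ((hcontΩ 0 ⟨hc0.le, le_rfl⟩).mono_of_mem_nhdsWithin (Icc_mem_nhdsLT hc0)).tendsto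
  have hΩ : ∀ᶠ T in 𝓝[<] (0:ℝ), HasDerivAt Ω (Ω' T) T ∧ HasDerivAt Ω' (Ω'' T) T ∧
      0 < Ω T ∧ Ω' T < 0 := by
    filter_upwards [Ioo_mem_nhdsLT hc0] with T hT
    have hT' := Ioo_subset_Ico_self hT
    exact ⟨hderiv T hT', hderiv' T hT', hpos T hT', hneg' T hT'⟩
  have hlt : lam < 1 := by
    refine hlam1.lt_of_le (not_lt.mp fun h1 => not_eventually_one_lt_mul_div_sq hΩ hΩ0 ?_)
    exact (hlam.eventually (eventually_gt_nhds h1)).mono fun T hT => by exact_mod_cast hT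
  have hL : ∀ᶠ T in 𝓝[<] (0:ℝ), Ω'' T * Ω T / Ω' T ^ 2 < 1 :=
    (hlam.eventually (eventually_lt_nhds hlt)).mono fun T hT => by exact_mod_cast hT
  obtain ⟨ε, hε, hLε⟩ := exists_pos_eventually_le_sq_of_tendsto_ne_zero hlam hlam0
  refine tendsto_atTop_mono' _ ?_
    ((tendsto_deriv_div_sq_pow_four_atTop hΩ hΩ0 hL).const_mul_atTop hε)
  filter_upwards [hLε] with T hT
  exact mul_le_mul_of_nonneg_right hT (by positivity)

/-- Lemma B.10: under the vanishing-Ω hypotheses with λ ∉ {0,1},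
N = L²·M⁴ → +∞ as T → 0⁻. -/
theorem N_tendsto_atTop_of_vanishing
    (c : ℝ) (hc : 0 < c) (Ω Ω' Ω'' : ℝ → ℝ)
    (hcontΩ : ContinuousOn Ω (Set.Icc (-c) 0))
    (hderiv : ∀ T ∈ Set.Ico (-c) (0:ℝ), HasDerivAt Ω (Ω' T) T)
    (hderiv' : ∀ T ∈ Set.Ico (-c) (0:ℝ), HasDerivAt Ω' (Ω'' T) T)
    (hcont : ContinuousOn Ω'' (Set.Ico (-c) 0))
    (hanti : StrictAntiOn Ω (Set.Ico (-c) 0))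
    (hpos : ∀ T ∈ Set.Ico (-c) (0:ℝ), 0 < Ω T)
    (hneg' : ∀ T ∈ Set.Ico (-c) (0:ℝ), Ω' T < 0)
    (hzero : Ω 0 = 0)
    (lam : EReal)
    (hlam : Tendsto (fun T => ((Ω'' T * Ω T / (Ω' T) ^ 2 : ℝ) : EReal))
      (𝓝[<] (0:ℝ)) (𝓝 lam))
    (hlam0 : lam ≠ 0) (hlam1 : lam ≠ 1) :
    Tendsto (fun T => (Ω'' T * Ω T / (Ω' T) ^ 2) ^ 2 * (Ω' T / (Ω T) ^ 2) ^ 4)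
      (𝓝[<] (0:ℝ)) atTop :=
  N_tendsto_atTop_of_vanishing_general c hc Ω Ω' Ω'' hcontΩ hderiv hderiv' hpos hneg' hzero lam hlam
    hlam0 hlam1
end

section
/- If Ω is positive, strictly monotonically increasing and C² on (0, c] (c > 0), continuous on [0,c] with Ω(0) = 0, and λ = lim_{T→0⁺} Ω''Ω/(Ω')² exists, then λ ≤ 1. -/
/-!
Suppose `λ > 1`. Then `Ω'² ≤ Ω''Ω` on some `(0, ε]`, i.e. `(Ω/Ω')' = 1 - Ω''Ω/Ω'² ≤ 0` there, so
`Ω/Ω'` is antitone and the logarithmic derivative `Ω'/Ω` is bounded above by its value `M` at `ε`.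
Integrating `(log Ω)' ≤ M` backwards from `ε` gives `Ω ≥ Ω(ε) e^{-Mε} > 0` on `(0, ε]`, which is
incompatible with `Ω(T) → Ω(0) = 0`.
-/

open Filter Topology Set

lemma antitoneOn_Ioc_of_hasDerivAt_nonpos {a b : ℝ} {f f' : ℝ → ℝ}
    (hf : ∀ x ∈ Ioc a b, HasDerivAt f (f' x) x) (hf' : ∀ x ∈ Ioc a b, f' x ≤ 0) :
    AntitoneOn f (Ioc a b) :=
  antitoneOn_of_hasDerivWithinAt_nonpos (convex_Ioc a b)
    (fun x hx => (hf x hx).continuousAt.continuousWithinAt)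
    (fun x hx => (hf x (interior_subset hx)).hasDerivWithinAt)
    (fun x hx => hf' x (interior_subset hx))

section

variable {a b : ℝ} {Ω Ω' Ω'' : ℝ → ℝ}

lemma antitoneOn_div_deriv_of_sq_deriv_le
    (hΩ : ∀ x ∈ Ioc a b, HasDerivAt Ω (Ω' x) x) (hΩ' : ∀ x ∈ Ioc a b, HasDerivAt Ω' (Ω'' x) x)
    (hne : ∀ x ∈ Ioc a b, Ω' x ≠ 0) (hsq : ∀ x ∈ Ioc a b, Ω' x ^ 2 ≤ Ω'' x * Ω x) :
    AntitoneOn (fun x => Ω x / Ω' x) (Ioc a b) :=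
  antitoneOn_Ioc_of_hasDerivAt_nonpos (fun x hx => (hΩ x hx).div (hΩ' x hx) (hne x hx))
    fun x hx => div_nonpos_of_nonpos_of_nonneg (by nlinarith [hsq x hx]) (sq_nonneg _)

/-- A backward Grönwall bound: `Ω' ≤ M Ω` makes `Ω(x) e^{-Mx}` antitone. -/
lemma mul_exp_le_of_deriv_le_mul {M : ℝ} (hΩ : ∀ x ∈ Ioc a b, HasDerivAt Ω (Ω' x) x)
    (hM : ∀ x ∈ Ioc a b, Ω' x ≤ M * Ω x) (hab : a < b) :
    ∀ T ∈ Ioc a b, Ω b * Real.exp (M * (T - b)) ≤ Ω T := by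
  have hanti : AntitoneOn (fun x => Ω x * Real.exp (-(M * x))) (Ioc a b) := by
    refine antitoneOn_Ioc_of_hasDerivAt_nonpos
      (fun x hx => (hΩ x hx).mul ((hasDerivAt_id x).const_mul M).neg.exp) fun x hx => ?_
    simp only [id, mul_one, Pi.neg_apply]
    nlinarith [hM x hx, Real.exp_pos (-(M * x))]
  intro T hT
  have hle := hanti hT (right_mem_Ioc.mpr hab) hT.2
  calc Ω b * Real.exp (M * (T - b))
      = Ω b * Real.exp (-(M * b)) * Real.exp (M * T) := by
        rw [mul_assoc, ← Real.exp_add]; ring_nf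
    _ ≤ Ω T * Real.exp (-(M * T)) * Real.exp (M * T) := by gcongr
    _ = Ω T := by rw [mul_assoc, ← Real.exp_add]; simp

lemma exists_pos_le_of_sq_deriv_le
    (hΩ : ∀ x ∈ Ioc a b, HasDerivAt Ω (Ω' x) x) (hΩ' : ∀ x ∈ Ioc a b, HasDerivAt Ω' (Ω'' x) x)
    (hpos' : ∀ x ∈ Ioc a b, 0 < Ω' x) (hsq : ∀ x ∈ Ioc a b, Ω' x ^ 2 ≤ Ω'' x * Ω x)
    (hab : a < b) (hb : 0 < Ω b) :
    ∃ m > 0, ∀ T ∈ Ioc a b, m ≤ Ω T := by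
  have hbmem : b ∈ Ioc a b := right_mem_Ioc.mpr hab
  set M := Ω' b / Ω b
  have hM : 0 ≤ M := div_nonneg (hpos' b hbmem).le hb.le
  have hlogDeriv : ∀ x ∈ Ioc a b, Ω' x ≤ M * Ω x := by
    intro x hx
    have h := antitoneOn_div_deriv_of_sq_deriv_le hΩ hΩ' (fun y hy => (hpos' y hy).ne') hsq
      hx hbmem hx.2
    rw [div_le_div_iff₀ (hpos' b hbmem) (hpos' x hx)] at h
    rw [div_mul_eq_mul_div, le_div_iff₀ hb]
    linarith
  refine ⟨Ω b * Real.exp (M * (a - b)), by positivity, fun T hT => ?_⟩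
  calc Ω b * Real.exp (M * (a - b)) ≤ Ω b * Real.exp (M * (T - b)) := by
        gcongr; exact hT.1.le
    _ ≤ Ω T := mul_exp_le_of_deriv_le_mul hΩ hlogDeriv hab T hT

end

theorem lambda_le_one_of_vanishing_future_general
    (c : ℝ) (hc : 0 < c) (Ω Ω' Ω'' : ℝ → ℝ)
    (hcontΩ : ContinuousOn Ω (Set.Icc 0 c))
    (hderiv : ∀ T ∈ Set.Ioc (0:ℝ) c, HasDerivAt Ω (Ω' T) T)
    (hderiv' : ∀ T ∈ Set.Ioc (0:ℝ) c, HasDerivAt Ω' (Ω'' T) T)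
    (hpos : ∀ T ∈ Set.Ioc (0:ℝ) c, 0 < Ω T)
    (hpos' : ∀ T ∈ Set.Ioc (0:ℝ) c, 0 < Ω' T)
    (hzero : Ω 0 = 0)
    (lam : EReal)
    (hlam : Tendsto (fun T => ((Ω'' T * Ω T / (Ω' T) ^ 2 : ℝ) : EReal))
      (𝓝[>] (0:ℝ)) (𝓝 lam)) :
    lam ≤ 1 := by
  by_contra! hlt
  have hsq : ∀ᶠ T in 𝓝[>] (0:ℝ), T ∈ Ioc 0 c ∧ Ω' T ^ 2 ≤ Ω'' T * Ω T := by
    filter_upwards [Ioc_mem_nhdsGT hc, hlam.eventually (eventually_gt_nhds hlt)] with T hT hgt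
    have hgt : 1 < Ω'' T * Ω T / Ω' T ^ 2 := by exact_mod_cast hgt
    exact ⟨hT, by linarith [(one_lt_div (pow_pos (hpos' T hT) 2)).mp hgt]⟩
  obtain ⟨ε, hε, hsub⟩ := mem_nhdsGT_iff_exists_Ioc_subset.mp hsq
  have hIoc : Ioc 0 ε ⊆ Ioc 0 c := fun T hT => (hsub hT).1
  have hεc : ε ∈ Ioc 0 c := hIoc (right_mem_Ioc.mpr hε)
  obtain ⟨m, hm, hle⟩ := exists_pos_le_of_sq_deriv_le (fun T hT => hderiv T (hIoc hT))
    (fun T hT => hderiv' T (hIoc hT)) (fun T hT => hpos' T (hIoc hT)) (fun T hT => (hsub hT).2)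
    hε (hpos ε hεc)
  have htend : Tendsto Ω (𝓝[>] 0) (𝓝 0) := by
    have h := (hcontΩ 0 ⟨le_rfl, hc.le⟩).mono_of_mem_nhdsWithin (Icc_mem_nhdsGT hc)
    rwa [ContinuousWithinAt, hzero] at h
  obtain ⟨T, hTsmall, hT⟩ :=
    ((htend.eventually (eventually_lt_nhds hm)).and (Ioc_mem_nhdsGT hε)).exists
  exact (hle T hT).not_gt hTsmall

/-- Time-reversed variant (Remark B.3): if Ω is continuous on [0,c], positive,
strictly increasing and C² on (0,c] with Ω(0) = 0, and
λ = lim_{T→0⁺} Ω''Ω/(Ω')² exists in the extended reals, then λ ≤ 1. -/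
theorem lambda_le_one_of_vanishing_future
    (c : ℝ) (hc : 0 < c) (Ω Ω' Ω'' : ℝ → ℝ)
    (hcontΩ : ContinuousOn Ω (Set.Icc 0 c))
    (hderiv : ∀ T ∈ Set.Ioc (0:ℝ) c, HasDerivAt Ω (Ω' T) T)
    (hderiv' : ∀ T ∈ Set.Ioc (0:ℝ) c, HasDerivAt Ω' (Ω'' T) T)
    (hcont : ContinuousOn Ω'' (Set.Ioc 0 c))
    (hmono : StrictMonoOn Ω (Set.Ioc 0 c))
    (hpos : ∀ T ∈ Set.Ioc (0:ℝ) c, 0 < Ω T)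
    (hpos' : ∀ T ∈ Set.Ioc (0:ℝ) c, 0 < Ω' T)
    (hzero : Ω 0 = 0)
    (lam : EReal)
    (hlam : Tendsto (fun T => ((Ω'' T * Ω T / (Ω' T) ^ 2 : ℝ) : EReal))
      (𝓝[>] (0:ℝ)) (𝓝 lam)) :
    lam ≤ 1 :=
  lambda_le_one_of_vanishing_future_general c hc Ω Ω' Ω'' hcontΩ hderiv hderiv' hpos hpos' hzero lam
    hlam
end

section
/- If Ω is positive, strictly monotonically decreasing and C² on (0, c] (c > 0) with Ω' < 0, Ω(T) → +∞ as T → 0⁺, and λ = lim_{T→0⁺} Ω''Ω/(Ω')² exists, then λ ≥ 1. -/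
/-!
Suppose `λ < 1`. Then `Ω'' Ω / Ω'² ≤ 1` on some interval `(0, δ]`, and since
`(Ω / Ω')' = 1 - Ω'' Ω / Ω'²`, the negative function `Ω / Ω'` is nondecreasing there.
Hence `Ω / Ω' ≤ (Ω / Ω')(δ) < 0`, so the logarithmic derivative `Ω' / Ω` is bounded on
`(0, δ]`. By the mean value theorem `log Ω` is then bounded near `0`, contradicting `Ω → ∞`.
-/

open Filter Topology Set

theorem not_tendsto_atTop_of_norm_hasDerivWithinAt_le {f f' : ℝ → ℝ} {a b K : ℝ} (hab : a < b)
    (hf : ∀ x ∈ Ioc a b, HasDerivWithinAt f (f' x) (Ioc a b) x)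
    (hf' : ∀ x ∈ Ioc a b, ‖f' x‖ ≤ K) :
    ¬Tendsto f (𝓝[>] a) atTop := by
  have hb : b ∈ Ioc a b := right_mem_Ioc.2 hab
  have hK : 0 ≤ K := (norm_nonneg _).trans (hf' b hb)
  have hbdd : ∀ x ∈ Ioc a b, f x ≤ f b + K * (b - a) := by
    intro x hx
    have hmvt := (convex_Ioc a b).norm_image_sub_le_of_norm_hasDerivWithin_le hf hf' hb hx
    have hdist : ‖x - b‖ ≤ b - a := by
      rw [Real.norm_eq_abs, abs_of_nonpos (by linarith [hx.2])]
      linarith [hx.1]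
    calc f x ≤ f b + ‖f x - f b‖ := by rw [Real.norm_eq_abs]; linarith [le_abs_self (f x - f b)]
      _ ≤ f b + K * ‖x - b‖ := by gcongr
      _ ≤ f b + K * (b - a) := by gcongr
  intro htend
  obtain ⟨x, hx_big, hx_mem⟩ :=
    ((htend.eventually_gt_atTop (f b + K * (b - a))).and (Ioc_mem_nhdsGT hab)).exists
  exact (hbdd x hx_mem).not_gt hx_big

theorem HasDerivAt.div_deriv {f f' : ℝ → ℝ} {f'' x : ℝ} (hf : HasDerivAt f (f' x) x)
    (hf' : HasDerivAt f' f'' x) (hne : f' x ≠ 0) :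
    HasDerivAt (fun y => f y / f' y) (1 - f'' * f x / f' x ^ 2) x :=
  (hf.div hf' hne).congr_deriv (by field_simp)

section DecreasingToInfinity

variable {Ω Ω' Ω'' : ℝ → ℝ} {a b : ℝ}
  (hderiv : ∀ T ∈ Ioc a b, HasDerivAt Ω (Ω' T) T)
  (hderiv' : ∀ T ∈ Ioc a b, HasDerivAt Ω' (Ω'' T) T)
  (hneg' : ∀ T ∈ Ioc a b, Ω' T < 0)
  (hle : ∀ T ∈ Ioc a b, Ω'' T * Ω T / Ω' T ^ 2 ≤ 1)
include hderiv hderiv' hneg' hle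

theorem monotoneOn_div_deriv_of_le_one : MonotoneOn (fun T => Ω T / Ω' T) (Ioc a b) := by
  have hder : ∀ T ∈ Ioc a b,
      HasDerivAt (fun T => Ω T / Ω' T) (1 - Ω'' T * Ω T / Ω' T ^ 2) T := fun T hT =>
    (hderiv T hT).div_deriv (hderiv' T hT) (hneg' T hT).ne
  refine monotoneOn_of_hasDerivWithinAt_nonneg (convex_Ioc a b)
    (fun T hT => (hder T hT).continuousAt.continuousWithinAt)
    (fun T hT => (hder T (interior_subset hT)).hasDerivWithinAt) fun T hT => ?_
  linarith [hle T (interior_subset hT)]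

theorem norm_logDeriv_le_of_le_one (hpos : ∀ T ∈ Ioc a b, 0 < Ω T) {T : ℝ} (hT : T ∈ Ioc a b) :
    ‖Ω' T / Ω T‖ ≤ ‖Ω' b / Ω b‖ := by
  have hb : b ∈ Ioc a b := right_mem_Ioc.2 (hT.1.trans_le hT.2)
  have hratio : ∀ S ∈ Ioc a b, Ω S / Ω' S < 0 := fun S hS =>
    div_neg_of_pos_of_neg (hpos S hS) (hneg' S hS)
  have hmono : Ω T / Ω' T ≤ Ω b / Ω' b :=
    monotoneOn_div_deriv_of_le_one hderiv hderiv' hneg' hle hT hb hT.2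
  have hinv : (Ω b / Ω' b)⁻¹ ≤ (Ω T / Ω' T)⁻¹ :=
    (inv_le_inv_of_neg (hratio b hb) (hratio T hT)).2 hmono
  rw [inv_div, inv_div] at hinv
  have hTneg : Ω' T / Ω T < 0 := div_neg_of_neg_of_pos (hneg' T hT) (hpos T hT)
  have hbneg : Ω' b / Ω b < 0 := div_neg_of_neg_of_pos (hneg' b hb) (hpos b hb)
  rw [Real.norm_eq_abs, Real.norm_eq_abs, abs_of_neg hTneg, abs_of_neg hbneg]
  linarith

theorem not_tendsto_atTop_of_le_one (hab : a < b) (hpos : ∀ T ∈ Ioc a b, 0 < Ω T) :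
    ¬Tendsto Ω (𝓝[>] a) atTop := fun hΩ =>
  not_tendsto_atTop_of_norm_hasDerivWithinAt_le hab
    (fun T hT => ((hderiv T hT).log (hpos T hT).ne').hasDerivWithinAt)
    (fun _ hT => norm_logDeriv_le_of_le_one hderiv hderiv' hneg' hle hpos hT)
    (Real.tendsto_log_atTop.comp hΩ)

end DecreasingToInfinity

theorem lambda_ge_one_of_diverging_past_general
    (c : ℝ) (hc : 0 < c) (Ω Ω' Ω'' : ℝ → ℝ)
    (hderiv : ∀ T ∈ Set.Ioc (0:ℝ) c, HasDerivAt Ω (Ω' T) T)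
    (hderiv' : ∀ T ∈ Set.Ioc (0:ℝ) c, HasDerivAt Ω' (Ω'' T) T)
    (hpos : ∀ T ∈ Set.Ioc (0:ℝ) c, 0 < Ω T)
    (hneg' : ∀ T ∈ Set.Ioc (0:ℝ) c, Ω' T < 0)
    (hdiv : Tendsto Ω (𝓝[>] (0:ℝ)) atTop)
    (lam : EReal)
    (hlam : Tendsto (fun T => ((Ω'' T * Ω T / (Ω' T) ^ 2 : ℝ) : EReal))
      (𝓝[>] (0:ℝ)) (𝓝 lam)) :
    1 ≤ lam := by
  by_contra! hlt
  have hev : ∀ᶠ T in 𝓝[>] (0:ℝ), Ω'' T * Ω T / Ω' T ^ 2 < 1 := by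
    filter_upwards [hlam.eventually_lt_const hlt] with T hT
    exact_mod_cast hT
  obtain ⟨u, hu, hsub⟩ := mem_nhdsGT_iff_exists_Ioc_subset.mp hev
  have hδc : Ioc 0 (min u c) ⊆ Ioc 0 c := Ioc_subset_Ioc_right (min_le_right u c)
  have hδu : Ioc 0 (min u c) ⊆ Ioc 0 u := Ioc_subset_Ioc_right (min_le_left u c)
  exact not_tendsto_atTop_of_le_one (fun T hT => hderiv T (hδc hT))
    (fun T hT => hderiv' T (hδc hT)) (fun T hT => hneg' T (hδc hT))
    (fun T hT => (hsub (hδu hT)).le) (lt_min hu hc) (fun T hT => hpos T (hδc hT)) hdiv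

/-- Time-reversed variant (Remark B.3): if Ω is positive, strictly decreasing
and C² on (0,c] with Ω' < 0 and Ω → +∞ as T → 0⁺, and λ = lim_{T→0⁺}
Ω''Ω/(Ω')² exists in the extended reals, then λ ≥ 1. -/
theorem lambda_ge_one_of_diverging_past
    (c : ℝ) (hc : 0 < c) (Ω Ω' Ω'' : ℝ → ℝ)
    (hderiv : ∀ T ∈ Set.Ioc (0:ℝ) c, HasDerivAt Ω (Ω' T) T)
    (hderiv' : ∀ T ∈ Set.Ioc (0:ℝ) c, HasDerivAt Ω' (Ω'' T) T)
    (hcont : ContinuousOn Ω'' (Set.Ioc 0 c))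
    (hanti : StrictAntiOn Ω (Set.Ioc 0 c))
    (hpos : ∀ T ∈ Set.Ioc (0:ℝ) c, 0 < Ω T)
    (hneg' : ∀ T ∈ Set.Ioc (0:ℝ) c, Ω' T < 0)
    (hdiv : Tendsto Ω (𝓝[>] (0:ℝ)) atTop)
    (lam : EReal)
    (hlam : Tendsto (fun T => ((Ω'' T * Ω T / (Ω' T) ^ 2 : ℝ) : EReal))
      (𝓝[>] (0:ℝ)) (𝓝 lam)) :
    1 ≤ lam :=
  lambda_ge_one_of_diverging_past_general c hc Ω Ω' Ω'' hderiv hderiv' hpos hneg' hdiv lam hlam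
end

section
/- Let Ω be positive, strictly monotonically decreasing, C² on (0,c] with Ω' < 0, Ω(T) → +∞ as T → 0⁺, and suppose λ = lim_{T→0⁺} Ω''Ω/(Ω')² exists with λ ≠ 1. Then Ω'(T)/Ω(T) → -∞ as T → 0⁺. -/
/-!
Write `g = Ω'/Ω = (log Ω)'` and `L = Ω''Ω/Ω'²`; then `g' = g² (L - 1)`. Since `log Ω → ∞`
as `T → 0⁺`, its derivative `g` is not bounded below near `0`. If `λ < 1`, then `g` is antitone
on some `(0, b]`, hence bounded below there by `g b`, which is impossible; so `λ > 1`, `g` is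
monotone on some `(0, b]`, and a monotone function that is not bounded below near `0` tends
to `-∞`.
-/

open Filter Topology Set

lemma monotoneOn_of_forall_hasDerivAt_nonneg {D : Set ℝ} (hD : Convex ℝ D) {f f' : ℝ → ℝ}
    (hf : ∀ x ∈ D, HasDerivAt f (f' x) x) (hf'₀ : ∀ x ∈ D, 0 ≤ f' x) : MonotoneOn f D :=
  monotoneOn_of_hasDerivWithinAt_nonneg hD
    (fun x hx => (hf x hx).continuousAt.continuousWithinAt)
    (fun x hx => (hf x (interior_subset hx)).hasDerivWithinAt)
    (fun x hx => hf'₀ x (interior_subset hx))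

lemma exists_monotoneOn_Ioc_of_eventually_hasDerivAt_nonneg {f f' : ℝ → ℝ} {a : ℝ}
    (h : ∀ᶠ x in 𝓝[>] a, HasDerivAt f (f' x) x ∧ 0 ≤ f' x) :
    ∃ b, a < b ∧ MonotoneOn f (Ioc a b) := by
  obtain ⟨b, hab, hsub⟩ := mem_nhdsGT_iff_exists_Ioc_subset.1 h
  exact ⟨b, hab, monotoneOn_of_forall_hasDerivAt_nonneg (convex_Ioc a b)
    (fun x hx => (hsub hx).1) (fun x hx => (hsub hx).2)⟩

lemma exists_antitoneOn_Ioc_of_eventually_hasDerivAt_nonpos {f f' : ℝ → ℝ} {a : ℝ}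
    (h : ∀ᶠ x in 𝓝[>] a, HasDerivAt f (f' x) x ∧ f' x ≤ 0) :
    ∃ b, a < b ∧ AntitoneOn f (Ioc a b) := by
  obtain ⟨b, hab, hmono⟩ := exists_monotoneOn_Ioc_of_eventually_hasDerivAt_nonneg
    (f := fun x => -f x) (f' := fun x => -f' x)
    (h.mono fun x hx => ⟨hx.1.neg, neg_nonneg.2 hx.2⟩)
  exact ⟨b, hab, fun x hx y hy hxy => neg_le_neg_iff.1 (hmono hx hy hxy)⟩

lemma frequently_lt_of_hasDerivAt_of_tendsto_atTop {f f' : ℝ → ℝ} {a : ℝ}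
    (hf : ∀ᶠ x in 𝓝[>] a, HasDerivAt f (f' x) x) (htop : Tendsto f (𝓝[>] a) atTop) (C : ℝ) :
    ∃ᶠ x in 𝓝[>] a, f' x < C := by
  by_contra hC
  rw [not_frequently] at hC
  obtain ⟨b, hab, hmono⟩ := exists_monotoneOn_Ioc_of_eventually_hasDerivAt_nonneg
    (f := fun x => f x - C * x) (f' := fun x => f' x - C)
    ((hf.and hC).mono fun x hx =>
      ⟨(hx.1.sub ((hasDerivAt_id' x).const_mul C)).congr_deriv (by ring),
        sub_nonneg.2 (not_lt.1 hx.2)⟩)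
  have hle : ∀ᶠ x in 𝓝[>] a, f x ≤ f b + C * (x - b) := by
    filter_upwards [Ioc_mem_nhdsGT hab] with x hx
    have := hmono hx (right_mem_Ioc.2 hab) hx.2
    linarith
  have hlim : Tendsto (fun x => f b + C * (x - b)) (𝓝[>] a) (𝓝 (f b + C * (a - b))) :=
    (Continuous.tendsto (by fun_prop) a).mono_left nhdsWithin_le_nhds
  exact not_tendsto_nhds_of_tendsto_atTop (tendsto_atTop_mono' _ hle htop) _ hlim

section Order

variable {α β : Type*} [TopologicalSpace α] [LinearOrder α] [OrderTopology α] [Preorder β]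
  {g : α → β} {a b : α}

lemma AntitoneOn.eventually_ge_nhdsGT (hg : AntitoneOn g (Ioc a b)) (hab : a < b) :
    ∀ᶠ x in 𝓝[>] a, g b ≤ g x := by
  filter_upwards [Ioc_mem_nhdsGT hab] with x hx
  exact hg hx (right_mem_Ioc.2 hab) hx.2

lemma MonotoneOn.tendsto_atBot_nhdsGT_of_frequently_lt (hg : MonotoneOn g (Ioc a b))
    (hab : a < b) (hfreq : ∀ C, ∃ᶠ x in 𝓝[>] a, g x < C) : Tendsto g (𝓝[>] a) atBot := by
  refine tendsto_atBot.2 fun C => ?_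
  obtain ⟨x, hxC, hx⟩ := ((hfreq C).and_eventually (Ioc_mem_nhdsGT hab)).exists
  filter_upwards [Ioc_mem_nhdsGT hx.1] with y hy
  exact (hg ⟨hy.1, hy.2.trans hx.2⟩ hx hy.2).trans hxC.le

end Order

lemma HasDerivAt.deriv_div_self {f f' f'' : ℝ → ℝ} {x : ℝ} (hf : HasDerivAt f (f' x) x)
    (hf' : HasDerivAt f' (f'' x) x) (h₀ : f x ≠ 0) (h₀' : f' x ≠ 0) :
    HasDerivAt (fun y => f' y / f y) ((f' x / f x) ^ 2 * (f'' x * f x / f' x ^ 2 - 1)) x := by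
  refine (hf'.div hf h₀).congr_deriv ?_
  field_simp

theorem ratio_tendsto_atBot_of_diverging_past_general
    (c : ℝ) (hc : 0 < c) (Ω Ω' Ω'' : ℝ → ℝ)
    (hderiv : ∀ T ∈ Set.Ioc (0:ℝ) c, HasDerivAt Ω (Ω' T) T)
    (hderiv' : ∀ T ∈ Set.Ioc (0:ℝ) c, HasDerivAt Ω' (Ω'' T) T)
    (hpos : ∀ T ∈ Set.Ioc (0:ℝ) c, 0 < Ω T)
    (hneg' : ∀ T ∈ Set.Ioc (0:ℝ) c, Ω' T < 0)
    (hdiv : Tendsto Ω (𝓝[>] (0:ℝ)) atTop)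
    (lam : EReal)
    (hlam : Tendsto (fun T => ((Ω'' T * Ω T / (Ω' T) ^ 2 : ℝ) : EReal))
      (𝓝[>] (0:ℝ)) (𝓝 lam))
    (hlam1 : lam ≠ 1) :
    Tendsto (fun T => Ω' T / Ω T) (𝓝[>] (0:ℝ)) atBot := by
  have hIoc : ∀ᶠ T in 𝓝[>] (0:ℝ), T ∈ Ioc 0 c := Ioc_mem_nhdsGT hc
  have hg := hIoc.mono fun T hT =>
    (hderiv T hT).deriv_div_self (hderiv' T hT) (hpos T hT).ne' (hneg' T hT).ne
  have hfreq : ∀ C, ∃ᶠ T in 𝓝[>] (0:ℝ), Ω' T / Ω T < C :=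
    frequently_lt_of_hasDerivAt_of_tendsto_atTop
      (hIoc.mono fun T hT => (hderiv T hT).log (hpos T hT).ne') (Real.tendsto_log_atTop.comp hdiv)
  rcases hlam1.lt_or_gt with hlt | hgt
  · obtain ⟨b, hb, hanti⟩ := exists_antitoneOn_Ioc_of_eventually_hasDerivAt_nonpos
      ((hg.and (hlam.eventually_lt_const hlt)).mono fun T hT => ⟨hT.1,
        mul_nonpos_of_nonneg_of_nonpos (sq_nonneg _) (sub_nonpos.2 (by exact_mod_cast hT.2.le))⟩)
    obtain ⟨T, hlow, hge⟩ := ((hfreq _).and_eventually (hanti.eventually_ge_nhdsGT hb)).exists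
    exact (hlow.not_ge hge).elim
  · obtain ⟨b, hb, hmono⟩ := exists_monotoneOn_Ioc_of_eventually_hasDerivAt_nonneg
      ((hg.and (hlam.eventually_const_lt hgt)).mono fun T hT => ⟨hT.1,
        mul_nonneg (sq_nonneg _) (sub_nonneg.2 (by exact_mod_cast hT.2.le))⟩)
    exact hmono.tendsto_atBot_nhdsGT_of_frequently_lt hb hfreq

/-- Remark B.5 (T → 0⁺ variant): if Ω is positive, strictly decreasing and C²
on (0,c] with Ω' < 0 and Ω → +∞ as T → 0⁺, and λ = lim_{T→0⁺} Ω''Ω/(Ω')²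
exists with λ ≠ 1, then Ω'/Ω → -∞ as T → 0⁺. -/
theorem ratio_tendsto_atBot_of_diverging_past
    (c : ℝ) (hc : 0 < c) (Ω Ω' Ω'' : ℝ → ℝ)
    (hderiv : ∀ T ∈ Set.Ioc (0:ℝ) c, HasDerivAt Ω (Ω' T) T)
    (hderiv' : ∀ T ∈ Set.Ioc (0:ℝ) c, HasDerivAt Ω' (Ω'' T) T)
    (hcont : ContinuousOn Ω'' (Set.Ioc 0 c))
    (hanti : StrictAntiOn Ω (Set.Ioc 0 c))
    (hpos : ∀ T ∈ Set.Ioc (0:ℝ) c, 0 < Ω T)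
    (hneg' : ∀ T ∈ Set.Ioc (0:ℝ) c, Ω' T < 0)
    (hdiv : Tendsto Ω (𝓝[>] (0:ℝ)) atTop)
    (lam : EReal)
    (hlam : Tendsto (fun T => ((Ω'' T * Ω T / (Ω' T) ^ 2 : ℝ) : EReal))
      (𝓝[>] (0:ℝ)) (𝓝 lam))
    (hlam1 : lam ≠ 1) :
    Tendsto (fun T => Ω' T / Ω T) (𝓝[>] (0:ℝ)) atBot :=
  ratio_tendsto_atBot_of_diverging_past_general c hc Ω Ω' Ω'' hderiv hderiv' hpos hneg' hdiv lam
    hlam hlam1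
end
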